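/- arXiv:1504.07520 — 11 statements merged into one kernel-verified Lean document; each statement's English description precedes it below -/
import Mathlib

section
/- Let (X,T) be a topological dynamical system. Suppose that for every d ≥ 2 and all non-empty open subsets U_1, …, U_d of X, the hitting time set N(U_1,…,U_d) = {n ∈ ℕ : ⋂_{i=1}^d T^{-(i-1)n} U_i ≠ ∅} is non-empty. Then (X,T) is Δ-transitive: for every d ≥ 2 there exists a residual (dense G_δ) subset X_0 of X such that for every x ∈ X_0 the point (x,…,x) has dense orbit in X^d under the map T × T^2 × ⋯ × T^d. -/
/-- The hitting time set `N(U_1, …, U_d) = {n ≥ 1 : ⋂ T^{-(i-1)n} U_i ≠ ∅}`. -/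
def hitSet {X : Type*} (T : X → X) {d : ℕ} (U : Fin d → Set X) : Set ℕ :=
  {n | 1 ≤ n ∧ (⋂ i : Fin d, (T^[i.val * n]) ⁻¹' U i).Nonempty}

theorem stmt1 {X : Type*} [MetricSpace X] [CompactSpace X] (T : X → X)
    (hT : Continuous T)
    (h : ∀ d : ℕ, 2 ≤ d → ∀ U : Fin d → Set X,
      (∀ i, IsOpen (U i)) → (∀ i, (U i).Nonempty) → (hitSet T U).Nonempty) :
    ∀ d : ℕ, 2 ≤ d → ∃ X₀ : Set X, IsGδ X₀ ∧ Dense X₀ ∧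
      ∀ x ∈ X₀, Dense (Set.range fun n : ℕ => fun j : Fin d => T^[(j.val + 1) * n] x) := by
  intro d hd
  obtain ⟨B, hBc, hBne, hB⟩ := TopologicalSpace.exists_countable_basis (Fin d → X)
  set F : ℕ → X → (Fin d → X) := fun n x j => T^[(j.val + 1) * n] x with hF
  have hFc : ∀ n, Continuous (F n) := fun n =>
    continuous_pi fun j => hT.iterate _
  have hopen : ∀ V ∈ B, IsOpen (⋃ n, F n ⁻¹' V) := fun V hV =>
    isOpen_iUnion fun n => (hB.isOpen hV).preimage (hFc n)
  have hdense : ∀ V ∈ B, Dense (⋃ n, F n ⁻¹' V) := by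
    intro V hV
    have hVne : V.Nonempty := Set.nonempty_iff_ne_empty.mpr (fun h0 => hBne (h0 ▸ hV))
    rw [dense_iff_inter_open]
    intro W hW hWne
    obtain ⟨v, hv⟩ := hVne
    obtain ⟨u, hu, huV⟩ := (isOpen_pi_iff'.mp (hB.isOpen hV)) v hv
    set U : Fin (d + 1) → Set X := Fin.cases W u with hU
    have hUo : ∀ i, IsOpen (U i) := by
      intro i
      refine Fin.cases ?_ ?_ i
      · simpa [hU] using hW
      · intro j; simpa [hU] using (hu j).1
    have hUne : ∀ i, (U i).Nonempty := by
      intro i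
      refine Fin.cases ?_ ?_ i
      · simpa [hU] using hWne
      · intro j; exact ⟨v j, by simpa [hU] using (hu j).2⟩
    obtain ⟨n, hn1, y, hy⟩ := h (d + 1) (by omega) U hUo hUne
    simp only [Set.mem_iInter] at hy
    have hyW : y ∈ W := by simpa [hU] using hy 0
    have hyV : F n y ∈ V := by
      apply huV
      intro j _
      have := hy j.succ
      simpa [hU, Fin.val_succ] using this
    exact ⟨y, ⟨hyW, Set.mem_iUnion.mpr ⟨n, hyV⟩⟩⟩
  refine ⟨⋂ V ∈ B, ⋃ n, F n ⁻¹' V, ?_, ?_, ?_⟩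
  · exact .biInter hBc fun V hV => (hopen V hV).isGδ
  · exact dense_biInter_of_isOpen hopen hBc hdense
  · intro x hx
    rw [hB.dense_iff]
    intro V hV hVne
    simp only [Set.mem_iInter] at hx
    obtain ⟨n, hn⟩ := Set.mem_iUnion.mp (hx V hV)
    exact ⟨F n x, hn, Set.mem_range_self n⟩
end

section
/- Let (X,T) be a Δ-transitive dynamical system (i.e., for all d ≥ 2 and non-empty open U_1,…,U_d ⊆ X, N(U_1,…,U_d) ≠ ∅, where N(U_1,…,U_d) = {n ∈ ℕ : ⋂_{i=1}^d T^{-(i-1)n}U_i ≠ ∅}). Then (X,T) is weakly mixing: for all non-empty open U_1, U_2, U_3, U_4 ⊆ X there exists n ∈ ℕ with U_1 ∩ T^{-n} U_3 ≠ ∅ and U_2 ∩ T^{-n} U_4 ≠ ∅. -/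
theorem stmt2 {X : Type*} [MetricSpace X] [CompactSpace X] (T : X → X)
    (hT : Continuous T)
    (h : ∀ d : ℕ, 2 ≤ d → ∀ U : Fin d → Set X,
      (∀ i, IsOpen (U i)) → (∀ i, (U i).Nonempty) → (hitSet T U).Nonempty) :
    ∀ U₁ U₂ U₃ U₄ : Set X, IsOpen U₁ → U₁.Nonempty → IsOpen U₂ → U₂.Nonempty →
      IsOpen U₃ → U₃.Nonempty → IsOpen U₄ → U₄.Nonempty →
      ∃ n : ℕ, 1 ≤ n ∧ (U₁ ∩ (T^[n]) ⁻¹' U₃).Nonempty ∧ (U₂ ∩ (T^[n]) ⁻¹' U₄).Nonempty := by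
  intro U₁ U₂ U₃ U₄ hO₁ hN₁ hO₂ hN₂ hO₃ hN₃ hO₄ hN₄
  -- transitivity from d = 2
  have trans2 : ∀ A B : Set X, IsOpen A → A.Nonempty → IsOpen B → B.Nonempty →
      ∃ n, 1 ≤ n ∧ (A ∩ (T^[n]) ⁻¹' B).Nonempty := by
    intro A B hA hAn hB hBn
    obtain ⟨n, hn1, x, hx⟩ := h 2 le_rfl ![A, B]
      (by intro i; fin_cases i <;> simpa) (by intro i; fin_cases i <;> simpa)
    refine ⟨n, hn1, x, ?_, ?_⟩
    · have := Set.mem_iInter.mp hx 0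
      simpa using this
    · have := Set.mem_iInter.mp hx 1
      simpa using this
  -- T is surjective
  have hsurj : Function.Surjective T := by
    by_contra hns
    have hrc : IsClosed (Set.range T) :=
      (isCompact_range hT).isClosed
    have hV : (Set.range T)ᶜ.Nonempty := by
      rw [Set.nonempty_compl]
      intro hr
      exact hns (Set.range_eq_univ.mp hr)
    obtain ⟨n, hn1, x, hx, hx'⟩ := trans2 _ _ hrc.isOpen_compl hV hrc.isOpen_compl hV
    apply hx'
    obtain ⟨m, rfl⟩ := Nat.exists_eq_add_of_le hn1
    rw [Function.iterate_add_apply]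
    exact ⟨_, rfl⟩
  -- pick k with W = U₄ ∩ T^{-k} U₁ nonempty
  obtain ⟨k, hk1, hWne⟩ := trans2 U₄ U₁ hO₄ hN₄ hO₁ hN₁
  set W : Set X := U₄ ∩ (T^[k]) ⁻¹' U₁ with hW
  have hWopen : IsOpen W := hO₄.inter (hO₁.preimage (hT.iterate k))
  set Z : Set X := (T^[k]) ⁻¹' U₃ with hZ
  have hZopen : IsOpen Z := hO₃.preimage (hT.iterate k)
  have hZne : Z.Nonempty := hN₃.preimage (hsurj.iterate k)
  -- apply d = 3
  obtain ⟨n, hn1, x, hx⟩ := h 3 (by norm_num) ![U₂, W, Z]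
    (by intro i; fin_cases i <;> simpa)
    (by intro i; fin_cases i <;> simpa)
  have h0 : x ∈ U₂ := by have := Set.mem_iInter.mp hx 0; simpa using this
  have h1 : T^[n] x ∈ W := by have := Set.mem_iInter.mp hx 1; simpa using this
  have h2 : T^[2 * n] x ∈ Z := by have := Set.mem_iInter.mp hx 2; simpa using this
  refine ⟨n, hn1, ⟨T^[n + k] x, ?_, ?_⟩, ⟨x, h0, h1.1⟩⟩
  · have : T^[k] (T^[n] x) ∈ U₁ := h1.2
    rwa [← Function.iterate_add_apply, Nat.add_comm] at this
  · have : T^[k] (T^[2 * n] x) ∈ U₃ := h2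
    rw [← Function.iterate_add_apply] at this
    show T^[n] (T^[n + k] x) ∈ U₃
    rw [← Function.iterate_add_apply]
    convert this using 2
    ring
end

section
/- Let (X,T) be a Δ-transitive dynamical system. Then the collection of hitting time sets {N(U_1,…,U_d) : d ≥ 2, U_1,…,U_d non-empty open subsets of X} is a filter base: for any two such sets N(U_1,…,U_d) and N(V_1,…,V_d) (same length d, after padding with X if necessary) there exist non-empty open sets W_1,…,W_d with N(W_1,…,W_d) ⊆ N(U_1,…,U_d) ∩ N(V_1,…,V_d), and in particular the intersection of any two hitting time sets of non-empty open sets contains a non-empty hitting time set of non-empty open sets. -/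
theorem stmt3 {X : Type*} [MetricSpace X] [CompactSpace X] (T : X → X)
    (hT : Continuous T)
    (h : ∀ d : ℕ, 2 ≤ d → ∀ U : Fin d → Set X,
      (∀ i, IsOpen (U i)) → (∀ i, (U i).Nonempty) → (hitSet T U).Nonempty) :
    ∀ d : ℕ, 2 ≤ d → ∀ U V : Fin d → Set X,
      (∀ i, IsOpen (U i)) → (∀ i, (U i).Nonempty) →
      (∀ i, IsOpen (V i)) → (∀ i, (V i).Nonempty) →
      ∃ W : Fin d → Set X, (∀ i, IsOpen (W i)) ∧ (∀ i, (W i).Nonempty) ∧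
        (hitSet T W).Nonempty ∧ hitSet T W ⊆ hitSet T U ∩ hitSet T V := by
  intro d hd U V hUo hUne hVo hVne
  -- interleaved family of 2d sets
  set Z : Fin (2 * d) → Set X := fun k =>
    if k.val % 2 = 0 then U ⟨k.val / 2, by omega⟩ else V ⟨k.val / 2, by omega⟩ with hZ
  have hZo : ∀ k, IsOpen (Z k) := by
    intro k; simp only [hZ]; split <;> [exact hUo _; exact hVo _]
  have hZne : ∀ k, (Z k).Nonempty := by
    intro k; simp only [hZ]; split <;> [exact hUne _; exact hVne _]
  obtain ⟨n, hn1, x, hx⟩ := h (2 * d) (by omega) Z hZo hZne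
  rw [Set.mem_iInter] at hx
  have hxU : ∀ i : Fin d, T^[2 * i.val * n] x ∈ U i := by
    intro i
    have := hx ⟨2 * i.val, by omega⟩
    simp only [hZ] at this
    rw [if_pos (by omega)] at this
    have h2 : (2 * i.val) / 2 = i.val := by omega
    simpa [h2] using this
  have hxV : ∀ i : Fin d, T^[(2 * i.val + 1) * n] x ∈ V i := by
    intro i
    have := hx ⟨2 * i.val + 1, by omega⟩
    simp only [hZ] at this
    rw [if_neg (by omega)] at this
    have h2 : (2 * i.val + 1) / 2 = i.val := by omega
    simpa [h2] using this
  refine ⟨fun i => U i ∩ T^[n] ⁻¹' (V i), fun i => (hUo i).inter ((hVo i).preimage (hT.iterate n)),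
    ?_, ?_, ?_⟩
  · intro i
    refine ⟨T^[2 * i.val * n] x, hxU i, ?_⟩
    have : T^[n] (T^[2 * i.val * n] x) = T^[(2 * i.val + 1) * n] x := by
      rw [← Function.iterate_add_apply]
      congr 1; ring
    simp only [Set.mem_preimage, this]
    exact hxV i
  · exact h d hd _ (fun i => (hUo i).inter ((hVo i).preimage (hT.iterate n)))
      (fun i => ⟨T^[2 * i.val * n] x, hxU i, by
        have : T^[n] (T^[2 * i.val * n] x) = T^[(2 * i.val + 1) * n] x := by
          rw [← Function.iterate_add_apply]; congr 1; ring
        simp only [Set.mem_preimage, this]; exact hxV i⟩)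
  · rintro m ⟨hm1, y, hy⟩
    rw [Set.mem_iInter] at hy
    constructor
    · exact ⟨hm1, y, Set.mem_iInter.2 fun i => (hy i).1⟩
    · refine ⟨hm1, T^[n] y, Set.mem_iInter.2 fun i => ?_⟩
      have h1 : T^[i.val * m] (T^[n] y) = T^[n] (T^[i.val * m] y) := by
        rw [← Function.iterate_add_apply, ← Function.iterate_add_apply, Nat.add_comm]
      simp only [Set.mem_preimage, h1]
      exact (hy i).2
end

section
/- Let (X,T) be a dynamical system such that the collection of hitting time sets {N(U_1,…,U_d) : d ≥ 2, U_i non-empty open} is a filter base (in particular each is non-empty and any finite intersection contains another member). Then for every d ≥ 2 and non-empty open U_1,…,U_d ⊆ X, the set N(U_1,…,U_d) is thick: for every N ∈ ℕ there exists n ∈ ℕ with {n, n+1, …, n+N} ⊆ N(U_1,…,U_d). -/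
theorem stmt4 {X : Type*} [MetricSpace X] [CompactSpace X] (T : X → X)
    (hT : Continuous T)
    (hbase : ∀ d : ℕ, 2 ≤ d → ∀ U V : Fin d → Set X,
      (∀ i, IsOpen (U i)) → (∀ i, (U i).Nonempty) →
      (∀ i, IsOpen (V i)) → (∀ i, (V i).Nonempty) →
      ∃ W : Fin d → Set X, (∀ i, IsOpen (W i)) ∧ (∀ i, (W i).Nonempty) ∧
        (hitSet T W).Nonempty ∧ hitSet T W ⊆ hitSet T U ∩ hitSet T V) :
    ∀ d : ℕ, 2 ≤ d → ∀ U : Fin d → Set X,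
      (∀ i, IsOpen (U i)) → (∀ i, (U i).Nonempty) →
      ∀ N : ℕ, ∃ n : ℕ, ∀ i ≤ N, n + i ∈ hitSet T U := by
  -- Lemma A: every iterated preimage of a nonempty open set is nonempty.
  have key : ∀ (A : Set X), IsOpen A → A.Nonempty → ∀ m : ℕ, (T^[m] ⁻¹' A).Nonempty := by
    intro A hAo hAne m
    rcases m with _ | k
    · simpa using hAne
    · obtain ⟨W, hWo, hWne, ⟨n, hn⟩, hsub⟩ :=
        hbase (k + 2) (by omega) (fun _ => A) (fun _ => A)
          (fun _ => hAo) (fun _ => hAne) (fun _ => hAo) (fun _ => hAne)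
      obtain ⟨hn1, x, hx⟩ := (hsub hn).1
      have hxm : T^[(k + 1) * n] x ∈ A := by
        have := Set.mem_iInter.mp hx ⟨k + 1, by omega⟩
        simpa using this
      refine ⟨T^[(k + 1) * n - (k + 1)] x, ?_⟩
      have hle : k + 1 ≤ (k + 1) * n := Nat.le_mul_of_pos_right _ hn1
      have : T^[k + 1] (T^[(k + 1) * n - (k + 1)] x) = T^[(k + 1) * n] x := by
        rw [← Function.iterate_add_apply, Nat.add_sub_cancel' hle]
      rw [Set.mem_preimage, this]; exact hxm
  intro d hd U hUo hUne N
  set V : ℕ → Fin d → Set X := fun k i => T^[i.val * k] ⁻¹' U i with hV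
  have hVo : ∀ k i, IsOpen (V k i) := fun k i => (hUo i).preimage (hT.iterate _)
  have hVne : ∀ k i, (V k i).Nonempty := fun k i => key (U i) (hUo i) (hUne i) _
  have hshift : ∀ k n, n ∈ hitSet T (V k) → n + k ∈ hitSet T U := by
    rintro k n ⟨hn1, x, hx⟩
    refine ⟨by omega, x, Set.mem_iInter.mpr fun i => ?_⟩
    have h1 : T^[i.val * k] (T^[i.val * n] x) ∈ U i := by
      have := Set.mem_iInter.mp hx i
      simpa [hV] using this
    have h2 : T^[i.val * (n + k)] x = T^[i.val * k] (T^[i.val * n] x) := by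
      rw [← Function.iterate_add_apply]
      ring_nf
    simpa [Set.mem_preimage, h2] using h1
  have main : ∀ M : ℕ, ∃ W : Fin d → Set X, (∀ i, IsOpen (W i)) ∧ (∀ i, (W i).Nonempty) ∧
      (hitSet T W).Nonempty ∧ ∀ n ∈ hitSet T W, ∀ k ≤ M, n ∈ hitSet T (V k) := by
    intro M
    induction M with
    | zero =>
      obtain ⟨W, hWo, hWne, hWh, hsub⟩ :=
        hbase d hd (V 0) (V 0) (hVo 0) (hVne 0) (hVo 0) (hVne 0)
      exact ⟨W, hWo, hWne, hWh, fun n hn k hk => by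
        interval_cases k; exact (hsub hn).1⟩
    | succ M ih =>
      obtain ⟨W, hWo, hWne, hWh, hsub⟩ := ih
      obtain ⟨W', hW'o, hW'ne, hW'h, hsub'⟩ :=
        hbase d hd W (V (M + 1)) hWo hWne (hVo _) (hVne _)
      refine ⟨W', hW'o, hW'ne, hW'h, fun n hn k hk => ?_⟩
      rcases Nat.lt_or_ge k (M + 1) with h | h
      · exact hsub n (hsub' hn).1 k (by omega)
      · have : k = M + 1 := by omega
        rw [this]; exact (hsub' hn).2
  obtain ⟨W, hWo, hWne, ⟨n, hn⟩, hsub⟩ := main N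
  exact ⟨n, fun i hi => hshift i n (hsub n hn i hi)⟩
end

section
/- Let (X,T) be a dynamical system and A ⊆ X a closed subset with at least two points. Then A is Δ-weakly mixing if and only if for every d ≥ 2 and all non-empty open subsets U_1,…,U_d of X each intersecting A, there exists n ∈ ℕ such that {0, n, 2n, …, (d-1)n} is an independence set for (U_1,…,U_d) with respect to A. -/
/-- `A` is a Δ-weakly mixing set for `T`: it has at least two points, and for all
`n, d ≥ 2` and non-empty open sets `U i j` intersecting `A`, the intersection
`⋂ i N(U i 0 ∩ A, U i 1, …, U i (d-1))` is non-empty. -/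
def DeltaWM {X : Type*} [TopologicalSpace X] (T : X → X) (A : Set X) : Prop :=
  A.Nontrivial ∧ ∀ n d : ℕ, 2 ≤ n → 2 ≤ d → ∀ U : Fin n → Fin d → Set X,
    (∀ i j, IsOpen (U i j)) → (∀ i j, (U i j ∩ A).Nonempty) →
    ∃ m : ℕ, 1 ≤ m ∧ ∀ i : Fin n, ∃ x ∈ A, ∀ j : Fin d, T^[j.val * m] x ∈ U i j

/-- `F` is an independence set for `(U_1,…,U_d)` with respect to `A`: for every non-empty
finite `J ⊆ F` and every selection `s`, the set `⋂_{j ∈ J} T^{-j} U_{s j}` intersects `A`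
(being an intersection of preimages of open sets, it is automatically open). -/
def IndepSetFor {X : Type*} (T : X → X) {d : ℕ} (U : Fin d → Set X) (A : Set X)
    (F : Set ℕ) : Prop :=
  ∀ J : Finset ℕ, J.Nonempty → ↑J ⊆ F → ∀ s : ℕ → Fin d,
    ∃ x ∈ A, ∀ j ∈ J, T^[j] x ∈ U (s j)

theorem stmt6 {X : Type*} [MetricSpace X] [CompactSpace X] (T : X → X)
    (hT : Continuous T) (A : Set X) (hA : IsClosed A) (hnt : A.Nontrivial) :
    DeltaWM T A ↔
      ∀ d : ℕ, 2 ≤ d → ∀ U : Fin d → Set X,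
        (∀ j, IsOpen (U j)) → (∀ j, (U j ∩ A).Nonempty) →
        ∃ n : ℕ, 1 ≤ n ∧ IndepSetFor T U A {m | ∃ i : Fin d, m = i.val * n} := by
  constructor
  · rintro ⟨-, h⟩ d hd U hUopen hUA
    have hdd : 2 ≤ d ^ d := le_trans hd (Nat.le_self_pow (by omega) d)
    obtain ⟨m, hm, hmain⟩ := h (d ^ d) d hdd hd
      (fun k j => U (finFunctionFinEquiv.symm k j))
      (fun k j => hUopen _) (fun k j => hUA _)
    refine ⟨m, hm, ?_⟩
    intro J hJ hJF s
    obtain ⟨x, hxA, hx⟩ := hmain (finFunctionFinEquiv (fun j => s (j.val * m)))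
    refine ⟨x, hxA, ?_⟩
    intro j hj
    obtain ⟨i, rfl⟩ := hJF hj
    have := hx i
    simpa using this
  · intro h
    refine ⟨hnt, ?_⟩
    intro n d hn hd U hUopen hUA
    have hnd : 2 ≤ n * d := le_trans hd (Nat.le_mul_of_pos_left d (by omega))
    obtain ⟨m, hm, hind⟩ := h (n * d) hnd
      (fun k => U (finProdFinEquiv.symm k).1 (finProdFinEquiv.symm k).2)
      (fun k => hUopen _ _) (fun k => hUA _ _)
    refine ⟨m, hm, ?_⟩
    intro i
    set s : ℕ → Fin (n * d) := fun t =>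
      finProdFinEquiv (i, if h : t / m < d then ⟨t / m, h⟩ else ⟨0, by omega⟩) with hs_def
    obtain ⟨x, hxA, hx⟩ := hind (Finset.image (fun j : Fin d => j.val * m) Finset.univ)
      ⟨0 * m, Finset.mem_image.2 ⟨⟨0, by omega⟩, Finset.mem_univ _, rfl⟩⟩
      (by
        intro t ht
        simp only [Finset.coe_image, Set.mem_image] at ht
        obtain ⟨j, -, rfl⟩ := ht
        exact ⟨⟨j.val, lt_of_lt_of_le j.2 (Nat.le_mul_of_pos_left d (by omega))⟩, rfl⟩) s
    refine ⟨x, hxA, ?_⟩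
    intro j
    have hmem : j.val * m ∈ Finset.image (fun j : Fin d => j.val * m) Finset.univ :=
      Finset.mem_image.2 ⟨j, Finset.mem_univ _, rfl⟩
    have hx2 := hx _ hmem
    have hdiv : j.val * m / m = j.val := Nat.mul_div_cancel _ (by omega)
    have hs : s (j.val * m) = finProdFinEquiv (i, j) := by
      simp [hs_def, hdiv]
    rw [hs] at hx2
    simpa using hx2
end

section
/- For every m ≥ 1, the set A_m(X,T) is open in the hyperspace 2^X with the Hausdorff metric, where A_m(X,T) consists of all closed subsets E of X with at least two points for which there exist k ≥ 2 and open sets W_1,…,W_k ⊆ X of diameter < 1/m covering E such that ⋂_{α ∈ {1,…,k}^k} N(W_{α(1)} ∩ E, W_{α(2)}, …, W_{α(k)}) ≠ ∅. -/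
open TopologicalSpace

/-- The set `A_m(X,T)` of closed sets `E` with at least two points admitting `k ≥ 2`
open sets of diameter `< 1/m` covering `E` with the common hitting-time condition. -/
def Am {X : Type*} [MetricSpace X] (T : X → X) (m : ℕ) : Set (NonemptyCompacts X) :=
  {E | (E : Set X).Nontrivial ∧ ∃ k : ℕ, 2 ≤ k ∧ ∃ W : Fin k → Set X,
    (∀ i, IsOpen (W i)) ∧ (∀ i, Metric.diam (W i) < 1 / (m : ℝ)) ∧
    (E : Set X) ⊆ ⋃ i, W i ∧
    ∃ n : ℕ, 1 ≤ n ∧ ∀ α : Fin k → Fin k,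
      ∃ x ∈ (E : Set X), ∀ j : Fin k, T^[j.val * n] x ∈ W (α j)}

/-! The metric topology of the Hausdorff distance on nonempty compacts is the Vietoris topology.
In it, `A_m(X,T)` is a union, over the data `k, W, n`, of finite intersections of Vietoris-open
sets: having two points, lying inside `⋃ i, W i`, and meeting each open set
`⋂ j, T^[j * n] ⁻¹' W (α j)`. -/

theorem TopologicalSpace.NonemptyCompacts.isOpen_setOf_nontrivial {α : Type*}
    [TopologicalSpace α] [T2Space α] :
    IsOpen {K : NonemptyCompacts α | (K : Set α).Nontrivial} := by
  refine isOpen_iff_forall_mem_open.2 fun K ⟨a, ha, b, hb, hab⟩ => ?_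
  obtain ⟨U, V, hU, hV, haU, hbV, hUV⟩ := t2_separation hab
  refine ⟨{L | ((L : Set α) ∩ U).Nonempty} ∩ {L | ((L : Set α) ∩ V).Nonempty}, ?_,
    (isOpen_inter_nonempty_of_isOpen hU).inter (isOpen_inter_nonempty_of_isOpen hV),
    ⟨a, ha, haU⟩, ⟨b, hb, hbV⟩⟩
  rintro L ⟨⟨x, hxL, hxU⟩, ⟨y, hyL, hyV⟩⟩
  exact ⟨x, hxL, y, hyL, hUV.ne_of_mem hxU hyV⟩

theorem isOpen_iInter_preimage_iterate {X : Type*} [TopologicalSpace X] {T : X → X}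
    (hT : Continuous T) {ι : Type*} [Finite ι] {W : ι → Set X} (hW : ∀ i, IsOpen (W i))
    (t : ι → ℕ) : IsOpen (⋂ i, T^[t i] ⁻¹' W i) :=
  isOpen_iInter_of_finite fun i => (hW i).preimage (hT.iterate _)

theorem stmt7_general {X : Type*} [MetricSpace X] (T : X → X)
    (hT : Continuous T) :
    ∀ m : ℕ, 1 ≤ m → IsOpen (Am T m) := by
  intro m _
  refine isOpen_iff_forall_mem_open.2 ?_
  rintro E ⟨hE, k, hk, W, hWopen, hWdiam, hEW, n, hn, hhit⟩
  let hitting (α : Fin k → Fin k) : Set X := ⋂ j : Fin k, T^[j.val * n] ⁻¹' W (α j)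
  refine ⟨{F | (F : Set X).Nontrivial} ∩ {F | (F : Set X) ⊆ ⋃ i, W i} ∩
      ⋂ α, {F | ((F : Set X) ∩ hitting α).Nonempty}, ?_, ?_, ?_⟩
  · rintro F ⟨⟨hF, hFW⟩, hFhit⟩
    refine ⟨hF, k, hk, W, hWopen, hWdiam, hFW, n, hn, fun α => ?_⟩
    obtain ⟨x, hxF, hx⟩ := Set.mem_iInter.1 hFhit α
    exact ⟨x, hxF, Set.mem_iInter.1 hx⟩
  · exact (NonemptyCompacts.isOpen_setOf_nontrivial.inter
      (NonemptyCompacts.isOpen_subsets_of_isOpen (isOpen_iUnion hWopen))).inter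
      (isOpen_iInter_of_finite fun α => NonemptyCompacts.isOpen_inter_nonempty_of_isOpen
        (isOpen_iInter_preimage_iterate hT (fun j => hWopen (α j)) _))
  · refine ⟨⟨hE, hEW⟩, Set.mem_iInter.2 fun α => ?_⟩
    obtain ⟨x, hxE, hx⟩ := hhit α
    exact ⟨x, hxE, Set.mem_iInter.2 hx⟩

theorem stmt7 {X : Type*} [MetricSpace X] [CompactSpace X] (T : X → X)
    (hT : Continuous T) :
    ∀ m : ℕ, 1 ≤ m → IsOpen (Am T m) :=
  stmt7_general T hT
end

section
/- Let (X,T) be a dynamical system. The collection Δ-WM(X,T) of all Δ-weakly mixing subsets of X equals ⋂_{m=1}^∞ A_m(X,T), and in particular Δ-WM(X,T) is a G_δ subset of the hyperspace 2^X. -/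
open TopologicalSpace

/-!
Membership in `Am T m` asks a compact set to lie inside one open set and to meet finitely many
others (the sets of points realising a pattern `α` along `0, n, …, (k-1)n` are open since `T` is
continuous), so it is an open condition for the Hausdorff metric and the intersection is `G_δ`.

A Δ-weakly mixing set lies in every `Am T m`: cover it by small balls centred in it and apply the
mixing property to the `k ^ k` rows `(W (α 0), …, W (α (k-1)))`. Conversely, if `E ∈ Am T m` for
arbitrarily large `m`, then `E` is infinite: for finite `E` a fine cover meets `E` in at most one
point per member, so the patterns `(i₀, i₀, …)` and `(i₀, i₁, …)` both start at the same point `a`,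
forcing `a` and `b` within twice the mesh. Hence a fine cover has at least `d` members, and any
`d` open sets meeting `E` are approximated by a pattern `α` whose members are near chosen points.
-/

open Filter Topology Metric

namespace TopologicalSpace.NonemptyCompacts

variable {X : Type*} [MetricSpace X]

theorem eventually_subset_of_isOpen {E : NonemptyCompacts X} {V : Set X} (hV : IsOpen V)
    (hEV : (E : Set X) ⊆ V) : ∀ᶠ F : NonemptyCompacts X in 𝓝 E, (F : Set X) ⊆ V := by
  obtain ⟨δ, hδ, hδV⟩ := E.isCompact.exists_thickening_subset_open hV hEV
  refine Metric.eventually_nhds_iff.2 ⟨δ, hδ, fun F hF x hx => hδV ?_⟩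
  obtain ⟨y, hyE, hxy⟩ := exists_dist_lt_of_hausdorffDist_lt hx hF (edist_ne_top F E)
  exact mem_thickening_iff.2 ⟨y, hyE, hxy⟩

theorem eventually_inter_nonempty_of_isOpen {E : NonemptyCompacts X} {V : Set X} (hV : IsOpen V)
    (hEV : ((E : Set X) ∩ V).Nonempty) :
    ∀ᶠ F : NonemptyCompacts X in 𝓝 E, ((F : Set X) ∩ V).Nonempty := by
  obtain ⟨x, hxE, hxV⟩ := hEV
  obtain ⟨ε, hε, hεV⟩ := Metric.isOpen_iff.1 hV x hxV
  refine Metric.eventually_nhds_iff.2 ⟨ε, hε, fun F hF => ?_⟩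
  obtain ⟨y, hyF, hyx⟩ := exists_dist_lt_of_hausdorffDist_lt' hxE hF (edist_ne_top F E)
  exact ⟨y, hyF, hεV hyx⟩

theorem eventually_nontrivial {E : NonemptyCompacts X} (hE : (E : Set X).Nontrivial) :
    ∀ᶠ F : NonemptyCompacts X in 𝓝 E, (F : Set X).Nontrivial := by
  obtain ⟨a, haE, b, hbE, hab⟩ := hE
  obtain ⟨U, V, hU, hV, haU, hbV, hUV⟩ := t2_separation hab
  filter_upwards [eventually_inter_nonempty_of_isOpen hU ⟨a, haE, haU⟩,
    eventually_inter_nonempty_of_isOpen hV ⟨b, hbE, hbV⟩] with F ⟨x, hxF, hxU⟩ ⟨y, hyF, hyV⟩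
  exact ⟨x, hxF, y, hyF, hUV.ne_of_mem hxU hyV⟩

end TopologicalSpace.NonemptyCompacts

theorem isOpen_Am {X : Type*} [MetricSpace X] {T : X → X} (hT : Continuous T) (m : ℕ) :
    IsOpen (Am T m) := by
  refine isOpen_iff_mem_nhds.2 fun E ⟨hE, k, hk, W, hWo, hWd, hEW, n, hn, hα⟩ => ?_
  have hO : ∀ α : Fin k → Fin k, IsOpen (⋂ j : Fin k, T^[j.val * n] ⁻¹' W (α j)) := fun α =>
    isOpen_iInter_of_finite fun j => (hWo _).preimage (hT.iterate _)
  filter_upwards [NonemptyCompacts.eventually_nontrivial hE,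
    NonemptyCompacts.eventually_subset_of_isOpen (isOpen_iUnion hWo) hEW,
    eventually_all.2 fun α => NonemptyCompacts.eventually_inter_nonempty_of_isOpen (hO α)
      (by simpa [Set.Nonempty] using hα α)] with F hF hFW hFα
  exact ⟨hF, k, hk, W, hWo, hWd, hFW, n, hn, fun α => by simpa [Set.Nonempty] using hFα α⟩

theorem IsCompact.exists_fin_cover_diam_lt {X : Type*} [MetricSpace X] {K : Set X}
    (hK : IsCompact K) (hne : K.Nonempty) {r : ℝ} (hr : 0 < r) (N : ℕ) :
    ∃ k, N ≤ k ∧ ∃ W : Fin k → Set X, (∀ i, IsOpen (W i)) ∧ (∀ i, diam (W i) < r) ∧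
      (∀ i, (W i ∩ K).Nonempty) ∧ K ⊆ ⋃ i, W i := by
  obtain ⟨t, htK, hKt⟩ := hK.elim_nhds_subcover (fun x => ball x (r / 3))
    fun x _ => ball_mem_nhds x (by positivity)
  obtain ⟨x₀, hx₀⟩ := hne
  let c : Fin (t.card + N) → X := Fin.append (fun i => (t.equivFin.symm i : X)) fun _ => x₀
  have hcK : ∀ i, c i ∈ K := Fin.addCases (fun i => by simpa [c] using htK _ (Finset.coe_mem _))
    fun i => by simpa [c] using hx₀
  refine ⟨t.card + N, Nat.le_add_left N _, fun i => ball (c i) (r / 3), fun i => isOpen_ball,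
    fun i => (diam_ball (by positivity)).trans_lt (by linarith),
    fun i => ⟨c i, mem_ball_self (by positivity), hcK i⟩, fun y hy => ?_⟩
  obtain ⟨x, hxt, hyx⟩ := Set.mem_iUnion₂.1 (hKt hy)
  refine Set.mem_iUnion.2 ⟨Fin.castAdd N (t.equivFin ⟨x, hxt⟩), ?_⟩
  simpa [c] using hyx

theorem DeltaWM.exists_iterate_mem {X : Type*} [TopologicalSpace X] {T : X → X} {A : Set X}
    (h : DeltaWM T A) {ι : Type*} [Fintype ι] (hι : 2 ≤ Fintype.card ι) {d : ℕ} (hd : 2 ≤ d)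
    (U : ι → Fin d → Set X) (hUo : ∀ i j, IsOpen (U i j)) (hUA : ∀ i j, (U i j ∩ A).Nonempty) :
    ∃ m, 1 ≤ m ∧ ∀ i, ∃ x ∈ A, ∀ j : Fin d, T^[j.val * m] x ∈ U i j := by
  let e := Fintype.equivFin ι
  obtain ⟨m, hm, hx⟩ := h.2 _ d hι hd (fun i => U (e.symm i)) (fun _ _ => hUo _ _)
    fun _ _ => hUA _ _
  exact ⟨m, hm, fun i => by simpa using hx (e i)⟩

theorem DeltaWM.mem_Am {X : Type*} [MetricSpace X] {T : X → X} {E : NonemptyCompacts X}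
    (h : DeltaWM T (E : Set X)) {m : ℕ} (hm : 0 < m) : E ∈ Am T m := by
  obtain ⟨k, hk, W, hWo, hWd, hWE, hEW⟩ :=
    E.isCompact.exists_fin_cover_diam_lt E.nonempty (r := 1 / m) (by positivity) 2
  have hcard : 2 ≤ Fintype.card (Fin k → Fin k) := by
    simpa using hk.trans (Nat.le_self_pow (by omega) k)
  obtain ⟨n, hn, hx⟩ := h.exists_iterate_mem hcard hk (fun α j => W (α j)) (fun _ _ => hWo _)
    fun _ _ => hWE _
  exact ⟨h.1, k, hk, W, hWo, hWd, hEW, n, hn, hx⟩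

theorem eventually_one_div_lt {c : ℝ} (hc : 0 < c) : ∀ᶠ m : ℕ in atTop, 1 / (m : ℝ) < c :=
  tendsto_one_div_atTop_nhds_zero_nat.eventually (gt_mem_nhds hc)

theorem Finset.card_le_of_subset_iUnion {α ι : Type*} [Fintype ι] {s : Finset α}
    {W : ι → Set α} (hsW : (s : Set α) ⊆ ⋃ i, W i) (hW : ∀ i, (W i ∩ s).Subsingleton) :
    s.card ≤ Fintype.card ι := by
  choose c hc using fun x : s => Set.mem_iUnion.1 (hsW x.2)
  simpa using Fintype.card_le_of_injective c fun x y hxy =>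
    Subtype.ext <| hW (c x) ⟨hc x, x.2⟩ ⟨by rw [hxy]; exact hc y, y.2⟩

section CompactSpace

variable {X : Type*} [MetricSpace X] [CompactSpace X]

theorem Set.Finite.eventually_inter_subsingleton {s : Set X} (hs : s.Finite) :
    ∀ᶠ m : ℕ in atTop, ∀ W : Set X, diam W < 1 / m → (W ∩ s).Subsingleton := by
  have hsep : ∀ᶠ m : ℕ in atTop, ∀ p ∈ s ×ˢ s, p.1 ≠ p.2 → 1 / (m : ℝ) < dist p.1 p.2 := by
    refine (eventually_all_finite (hs.prod hs)).2 fun p _ => ?_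
    by_cases hp : p.1 = p.2
    · exact Eventually.of_forall fun _ h => absurd hp h
    · filter_upwards [eventually_one_div_lt (dist_pos.2 hp)] with m hm using fun _ => hm
  filter_upwards [hsep] with m hm W hW x ⟨hxW, hxs⟩ y ⟨hyW, hys⟩
  by_contra hxy
  exact (hm (x, y) ⟨hxs, hys⟩ hxy).not_gt
    ((dist_le_diam_of_mem (.all W) hxW hyW).trans_lt hW)

theorem infinite_of_frequently_mem_Am {T : X → X} {E : NonemptyCompacts X}
    (h : ∃ᶠ m in atTop, E ∈ Am T m) : (E : Set X).Infinite := by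
  intro hfin
  obtain ⟨_, hE⟩ := h.exists
  obtain ⟨a, haE, b, hbE, hab⟩ := hE.1
  have hsmall := hfin.eventually_inter_subsingleton.and
    (eventually_one_div_lt (half_pos (dist_pos.2 hab)))
  obtain ⟨m, ⟨-, k, hk, W, -, hWd, hEW, n, -, hα⟩, hsub, hm⟩ := (h.and_eventually hsmall).exists
  obtain ⟨i₀, ha⟩ := Set.mem_iUnion.1 (hEW haE)
  obtain ⟨i₁, hb⟩ := Set.mem_iUnion.1 (hEW hbE)
  -- `W i₀` meets `E` only in `a`, so every pattern starting at `i₀` is realised by `a` itself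
  have hTa : ∀ i, T^[n] a ∈ W i := fun i => by
    obtain ⟨x, hxE, hx⟩ := hα fun l => if l.val = 1 then i else i₀
    have hxa : x = a := hsub (W i₀) (hWd i₀) ⟨by simpa using hx ⟨0, by omega⟩, hxE⟩ ⟨ha, haE⟩
    simpa [hxa] using hx ⟨1, hk⟩
  have : dist a b < 1 / m + 1 / m := calc
    dist a b ≤ dist a (T^[n] a) + dist (T^[n] a) b := dist_triangle _ _ _
    _ < 1 / m + 1 / m := add_lt_add
      ((dist_le_diam_of_mem (.all _) ha (hTa i₀)).trans_lt (hWd i₀))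
      ((dist_le_diam_of_mem (.all _) (hTa i₁) hb).trans_lt (hWd i₁))
  linarith

theorem deltaWM_of_frequently_mem_Am {T : X → X} {E : NonemptyCompacts X}
    (h : ∃ᶠ m in atTop, E ∈ Am T m) : DeltaWM T (E : Set X) := by
  refine ⟨h.exists.choose_spec.1, fun n d _ _ U hUo hUE => ?_⟩
  choose y hyU hyE using hUE
  obtain ⟨t, htE, htd⟩ := (infinite_of_frequently_mem_Am h).exists_subset_card_eq d
  have hball : ∀ᶠ m : ℕ in atTop, ∀ i j, ball (y i j) (1 / m) ⊆ U i j := by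
    refine eventually_all.2 fun i => eventually_all.2 fun j => ?_
    obtain ⟨ε, hε, hεU⟩ := Metric.isOpen_iff.1 (hUo i j) _ (hyU i j)
    filter_upwards [eventually_one_div_lt hε] with m hm using (ball_subset_ball hm.le).trans hεU
  obtain ⟨m, ⟨-, k, -, W, -, hWd, hEW, N, hN, hα⟩, ht, hmU⟩ :=
    (h.and_eventually (t.finite_toSet.eventually_inter_subsingleton.and hball)).exists
  have hdk : d ≤ k := by
    simpa [htd] using Finset.card_le_of_subset_iUnion (htE.trans hEW) fun i => ht _ (hWd i)
  choose c hc using fun i j => Set.mem_iUnion.1 (hEW (hyE i j))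
  refine ⟨N, hN, fun i => ?_⟩
  obtain ⟨x, hxE, hx⟩ := hα fun l => if hl : l.val < d then c i ⟨l, hl⟩ else l
  refine ⟨x, hxE, fun j => hmU i j (mem_ball.2 ?_)⟩
  have hxj : T^[j.val * N] x ∈ W (c i j) := by simpa using hx (Fin.castLE hdk j)
  exact (dist_le_diam_of_mem (.all _) hxj (hc i j)).trans_lt (hWd _)

end CompactSpace

theorem stmt8 {X : Type*} [MetricSpace X] [CompactSpace X] (T : X → X)
    (hT : Continuous T) :
    {E : NonemptyCompacts X | DeltaWM T (E : Set X)} = (⋂ m ∈ Set.Ici 1, Am T m) ∧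
    IsGδ {E : NonemptyCompacts X | DeltaWM T (E : Set X)} := by
  have heq : {E : NonemptyCompacts X | DeltaWM T (E : Set X)} = ⋂ m ∈ Set.Ici 1, Am T m := by
    ext E
    simp only [Set.mem_ofPred_eq, Set.mem_iInter, Set.mem_Ici]
    exact ⟨fun h m hm => h.mem_Am hm,
      fun h => deltaWM_of_frequently_mem_Am (eventually_atTop.2 ⟨1, h⟩).frequently⟩
  exact ⟨heq, heq ▸ .biInter (Set.to_countable _) fun m _ => (isOpen_Am hT m).isGδ⟩
end

section
/- Let (X,T) be a dynamical system and E a Δ-weakly mixing subset of X. For every ε > 0 and d ∈ ℕ, the collection X(ε,d,E) of closed subsets of X that are (ε,d)-spread in E is open in the hyperspace 2^X, and X(ε,d,E) ∩ 2^E is dense in 2^E. Consequently X(E) := ⋂_{d,k ≥ 1} X(1/k, d, E) intersected with 2^E is a residual subset of 2^E. -/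
open TopologicalSpace

/-- `A` is `(ε,d)`-spread in `E`. -/
def Spread {X : Type*} [MetricSpace X] (T : X → X) (ε : ℝ) (d : ℕ) (A E : Set X) : Prop :=
  ∃ δ : ℝ, 0 < δ ∧ δ < ε ∧ ∃ n : ℕ, ∃ z : Fin n → X, Function.Injective z ∧
    A ⊆ ⋃ i, Metric.ball (z i) δ ∧
    ∀ g : Fin d → Fin n → X, (∀ j i, g j i ∈ E) →
      ∃ k : ℕ, 1 ≤ k ∧ 1 / (k : ℝ) < ε ∧
        ∀ i : Fin n, ∀ j : Fin d,
          T^[(j.val + 1) * k] '' Metric.ball (z i) δ ⊆ Metric.ball (g j i) ε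

/-! Openness is immediate: being spread only asks `F` to lie in a fixed finite union of open
balls. For density, take a finite `η/3`-net `y` of `F ⊆ E` and a finite `ε/4`-net `S` of `E`.
There are finitely many target configurations `h : Fin d → Fin n → S`; the multipliers
`M h = (L + 1) (d + 1) ^ (index of h)` make the exponents `(j + 1) M h` pairwise distinct and
nonzero, so a single application of Δ-weak mixing, with exponent `0` asking for `x i` near `y i`
and exponent `(j + 1) M h` asking for it to land near `h j i`, yields points `x i` and `m` such
that `k = M h m` serves configuration `h`. Continuity of the finitely many iterates involved
gives the radius `δ`, so `{x i}` is `(ε,d)`-spread and Hausdorff close to `F`. Residuality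
follows since the intersection is countable. -/

open Metric Set Function Filter Topology

lemma exists_pos_forall_lt {ι : Type*} [Finite ι] {f : ι → ℝ} (hf : ∀ i, 0 < f i) :
    ∃ r, 0 < r ∧ ∀ i, r < f i :=
  (((eventually_all.2 fun i => eventually_lt_nhds (hf i)).filter_mono nhdsWithin_le_nhds).and
    (self_mem_nhdsWithin : ∀ᶠ r in 𝓝[>] (0 : ℝ), 0 < r)).exists.imp fun _ h => ⟨h.2, h.1⟩

lemma Nat.eq_and_eq_of_mul_pow_eq {b u v s t : ℕ} (hu : 0 < u) (hub : u < b) (hv : 0 < v)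
    (hvb : v < b) (h : u * b ^ s = v * b ^ t) : u = v ∧ s = t := by
  wlog hst : s ≤ t generalizing u v s t
  · exact (this hv hvb hu hub h.symm (le_of_not_ge hst)).imp Eq.symm Eq.symm
  obtain ⟨t, rfl⟩ := Nat.exists_eq_add_of_le hst
  have huv : u = v * b ^ t :=
    Nat.eq_of_mul_eq_mul_right (pow_pos (hu.trans hub) s) (by rw [h, pow_add]; ring)
  rcases Nat.eq_zero_or_pos t with rfl | ht
  · simpa using huv
  · have : b ≤ v * b ^ t := le_mul_of_one_le_of_le hv (Nat.le_self_pow ht.ne' b)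
    omega

lemma exists_injective_succ_mul (G : Type*) [Finite G] (d L : ℕ) :
    ∃ M : G → ℕ, (∀ h, L < M h) ∧ Injective fun p : Fin d × G => (p.1.val + 1) * M p.2 := by
  let e := Finite.equivFin G
  refine ⟨fun h => (L + 1) * (d + 1) ^ (e h : ℕ), fun h => ?_, fun p q hpq => ?_⟩
  · exact Nat.lt_of_lt_of_le (Nat.lt_succ_self L) (Nat.le_mul_of_pos_right _ (by positivity))
  · have hpq' : (p.1.val + 1) * (d + 1) ^ (e p.2 : ℕ) = (q.1.val + 1) * (d + 1) ^ (e q.2 : ℕ) :=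
      Nat.eq_of_mul_eq_mul_left (Nat.succ_pos L) (by simp only at hpq; linarith [hpq])
    obtain ⟨hj, hh⟩ := Nat.eq_and_eq_of_mul_pow_eq (by omega) (by omega) (by omega) (by omega) hpq'
    exact Prod.ext (Fin.ext (by omega)) (e.injective (Fin.ext hh))

namespace DeltaWM

variable {X : Type*} {T : X → X} {A : Set X}

lemma exists_forall_iterate_mem [TopologicalSpace X] (hwm : DeltaWM T A) {ι : Type*} [Finite ι]
    {D : ℕ} (U : ι → Fin D → Set X) (hU : ∀ i t, IsOpen (U i t))
    (hUA : ∀ i t, (U i t ∩ A).Nonempty) :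
    ∃ m, 1 ≤ m ∧ ∀ i, ∃ x ∈ A, ∀ t : Fin D, T^[t * m] x ∈ U i t := by
  let e := Finite.equivFin ι
  let U' : Fin (Nat.card ι + 2) → Fin (D + 2) → Set X := fun r t =>
    if h : r.val < Nat.card ι ∧ t.val < D then U (e.symm ⟨r, h.1⟩) ⟨t, h.2⟩ else univ
  obtain ⟨m, hm, hx⟩ := hwm.2 _ _ (by omega) (by omega) U'
    (fun r t => by unfold U'; split_ifs; exacts [hU _ _, isOpen_univ])
    (fun r t => by unfold U'; split_ifs; exacts [hUA _ _, (univ_inter A).symm ▸ hwm.1.nonempty])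
  refine ⟨m, hm, fun i => ?_⟩
  obtain ⟨x, hxA, hxU⟩ := hx (Fin.castAdd 2 (e i))
  refine ⟨x, hxA, fun t => ?_⟩
  simpa [U', t.isLt] using hxU (Fin.castAdd 2 t)

lemma exists_forall_iterate_mem_of_injective [TopologicalSpace X] (hwm : DeltaWM T A)
    {ι κ : Type*} [Finite ι] [Finite κ] {c : κ → ℕ} (hc : Injective c) (V : ι → κ → Set X)
    (hV : ∀ i k, IsOpen (V i k)) (hVA : ∀ i k, (V i k ∩ A).Nonempty) :
    ∃ m, 1 ≤ m ∧ ∀ i, ∃ x ∈ A, ∀ k, T^[c k * m] x ∈ V i k := by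
  obtain ⟨D, hD⟩ := (finite_range c).bddAbove
  let U : ι → Fin (D + 1) → Set X := fun i t => ⋂ k ∈ {k | c k = t.val}, V i k
  have hUA : ∀ i t, (U i t ∩ A).Nonempty := by
    intro i t
    by_cases ht : ∃ k, c k = t.val
    · obtain ⟨k, hk⟩ := ht
      refine (hVA i k).mono (inter_subset_inter_left _ fun x hx => mem_iInter₂.2 fun k' hk' => ?_)
      rwa [hc (hk'.trans hk.symm)]
    · push Not at ht
      simpa [U, ht] using hwm.1.nonempty
  obtain ⟨m, hm, hx⟩ := hwm.exists_forall_iterate_mem U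
    (fun i t => (toFinite _).isOpen_biInter fun k _ => hV i k) hUA
  refine ⟨m, hm, fun i => ?_⟩
  obtain ⟨x, hxA, hxU⟩ := hx i
  exact ⟨x, hxA, fun k => mem_iInter₂.1 (hxU ⟨c k, Nat.lt_succ_of_le (hD ⟨k, rfl⟩)⟩) k rfl⟩

end DeltaWM

section Metric

variable {X : Type*} [MetricSpace X] {T : X → X} {E : Set X}

lemma exists_pos_injective_of_forall_dist_lt {ι : Type*} [Finite ι] {y : ι → X}
    (hy : Injective y) : ∃ r, 0 < r ∧ ∀ x : ι → X, (∀ i, dist (x i) (y i) < r) → Injective x := by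
  obtain ⟨r, hr, hry⟩ := exists_pos_forall_lt
    (f := fun p : {p : ι × ι // p.1 ≠ p.2} => dist (y p.1.1) (y p.1.2) / 2)
    fun p => half_pos (dist_pos.2 (hy.ne p.2))
  refine ⟨r, hr, fun x hx i i' hii => by_contra fun hne => ?_⟩
  have hsep := hry ⟨(i, i'), hne⟩
  have htri : dist (y i) (y i') ≤ dist (x i) (y i) + dist (x i') (y i') :=
    hii ▸ dist_triangle_left _ _ _
  linarith [hx i, hx i']

lemma hausdorffDist_range_le {ι : Type*} {x y : ι → X} {F : Set X} {r : ℝ} (hr : 0 ≤ r)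
    (hyF : ∀ i, y i ∈ F) (hFy : F ⊆ ⋃ i, ball (y i) r) (hxy : ∀ i, dist (x i) (y i) < r) :
    hausdorffDist (range x) F ≤ 2 * r := by
  refine hausdorffDist_le_of_mem_dist (by positivity) ?_ fun p hp => ?_
  · rintro _ ⟨i, rfl⟩
    exact ⟨y i, hyF i, by linarith [hxy i]⟩
  · obtain ⟨i, hi⟩ := mem_iUnion.1 (hFy hp)
    refine ⟨x i, mem_range_self i, ?_⟩
    linarith [dist_triangle_right p (x i) (y i), mem_ball.1 hi, hxy i]

lemma spread_range_of_forall_exists (hT : Continuous T) {n d : ℕ} {x : Fin n → X}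
    (hx : Injective x) {ε : ℝ} (hε : 0 < ε) {G : Type*} [Finite G] (k : G → ℕ)
    (hk : ∀ h, 1 ≤ k h) (hkε : ∀ h, 1 / (k h : ℝ) < ε)
    (hg : ∀ g : Fin d → Fin n → X, (∀ j i, g j i ∈ E) →
      ∃ h, ∀ i j, dist (T^[(j.val + 1) * k h] (x i)) (g j i) < ε / 2) :
    Spread T ε d (range x) E := by
  have hnear : ∀ i, ∀ᶠ w in 𝓝 (x i), ∀ p : G × Fin d,
      dist (T^[(p.2.val + 1) * k p.1] w) (T^[(p.2.val + 1) * k p.1] (x i)) < ε / 2 :=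
    fun i => eventually_all.2 fun p =>
      Metric.tendsto_nhds.1 ((hT.iterate _).tendsto (x i)) _ (half_pos hε)
  choose δ hδ hδnear using fun i => Metric.eventually_nhds_iff_ball.1 (hnear i)
  obtain ⟨δ₀, hδ₀, hδ₀lt⟩ := exists_pos_forall_lt (f := fun o : Option (Fin n) => o.elim ε δ)
    (by rintro (_ | i); exacts [hε, hδ i])
  refine ⟨δ₀, hδ₀, hδ₀lt none, n, x, hx, ?_, fun g hgE => ?_⟩
  · rintro _ ⟨i, rfl⟩
    exact mem_iUnion.2 ⟨i, mem_ball_self hδ₀⟩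
  obtain ⟨h, hh⟩ := hg g hgE
  refine ⟨k h, hk h, hkε h, fun i j => ?_⟩
  rintro _ ⟨w, hw, rfl⟩
  have := hδnear i w (ball_subset_ball (hδ₀lt (some i)).le hw) (h, j)
  rw [mem_ball]
  linarith [dist_triangle (T^[(j.val + 1) * k h] w) (T^[(j.val + 1) * k h] (x i)) (g j i), hh i j]

lemma DeltaWM.exists_near_forall_dist_iterate_lt (hwm : DeltaWM T E) {G : Type*} [Finite G]
    {n d : ℕ} (y : Fin n → X) (hyE : ∀ i, y i ∈ E) (τ : G → Fin d → Fin n → X)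
    (hτ : ∀ h j i, τ h j i ∈ E) {r ρ : ℝ} (hr : 0 < r) (hρ : 0 < ρ) (L : ℕ) :
    ∃ x : Fin n → X, (∀ i, x i ∈ E ∧ dist (x i) (y i) < r) ∧ ∃ k : G → ℕ, (∀ h, L < k h) ∧
      ∀ h i (j : Fin d), dist (T^[(j.val + 1) * k h] (x i)) (τ h j i) < ρ := by
  obtain ⟨M, hLM, hM⟩ := exists_injective_succ_mul G d L
  let c : Option (Fin d × G) → ℕ := fun o => o.elim 0 fun p => (p.1.val + 1) * M p.2
  have hc : Injective c := by
    rintro (_ | p) (_ | q) hpq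
    · rfl
    · exact absurd hpq.symm (Nat.mul_ne_zero (Nat.succ_ne_zero _) (hLM q.2).ne_bot)
    · exact absurd hpq (Nat.mul_ne_zero (Nat.succ_ne_zero _) (hLM p.2).ne_bot)
    · exact congrArg some (hM hpq)
  let V : Fin n → Option (Fin d × G) → Set X := fun i o =>
    o.elim (ball (y i) r) fun p => ball (τ p.2 p.1 i) ρ
  obtain ⟨m, hm, hx⟩ := hwm.exists_forall_iterate_mem_of_injective hc V
    (by rintro i (_ | p) <;> exact isOpen_ball)
    (by rintro i (_ | p); exacts [⟨y i, mem_ball_self hr, hyE i⟩,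
      ⟨τ p.2 p.1 i, mem_ball_self hρ, hτ _ _ _⟩])
  choose x hxE hxV using hx
  refine ⟨x, fun i => ⟨hxE i, by simpa [c, V] using hxV i none⟩, fun h => M h * m,
    fun h => (hLM h).trans_le (Nat.le_mul_of_pos_right _ hm), fun h i j => ?_⟩
  simpa [c, V, mul_assoc] using hxV i (some (j, h))

lemma DeltaWM.exists_spread_finite_near (hT : Continuous T) (hwm : DeltaWM T E)
    (hE : TotallyBounded E) {ε : ℝ} (hε : 0 < ε) (d : ℕ) {F : Set X} (hF : F.Nonempty)
    (hFE : F ⊆ E) {η : ℝ} (hη : 0 < η) :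
    ∃ n, ∃ x : Fin n → X, (range x).Nonempty ∧ range x ⊆ E ∧ Spread T ε d (range x) E ∧
      hausdorffDist (range x) F < η := by
  obtain ⟨t, htF, htfin, hFt⟩ :=
    finite_approx_of_totallyBounded (hE.subset hFE) (η / 3) (by positivity)
  obtain ⟨n, y, rfl⟩ := htfin.fin_embedding
  rw [biUnion_range] at hFt
  obtain ⟨S, hSE, hSfin, hES⟩ := finite_approx_of_totallyBounded hE (ε / 4) (by positivity)
  have := hSfin.to_subtype
  obtain ⟨r, hr, hrinj⟩ := exists_pos_injective_of_forall_dist_lt y.injective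
  obtain ⟨L, hL⟩ := exists_nat_one_div_lt hε
  obtain ⟨x, hx, k, hLk, hk⟩ := hwm.exists_near_forall_dist_iterate_lt (G := Fin d → Fin n → S) y
    (fun i => hFE (htF ⟨i, rfl⟩)) (fun h j i => h j i) (fun h j i => hSE (h j i).2)
    (lt_min hr (by positivity : 0 < η / 3)) (by positivity : 0 < ε / 4) L
  refine ⟨n, x, ?_, fun _ ⟨i, hi⟩ => hi ▸ (hx i).1, ?_, ?_⟩
  · obtain ⟨i, -⟩ := mem_iUnion.1 (hFt hF.some_mem)
    exact range_nonempty_iff_nonempty.2 ⟨i⟩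
  · refine spread_range_of_forall_exists hT (hrinj x fun i => (hx i).2.trans_le (min_le_left _ _))
      hε k (fun h => by have := hLk h; omega) (fun h => ?_) fun g hg => ?_
    · calc 1 / (k h : ℝ) ≤ 1 / (L + 1 : ℝ) := by
            gcongr; exact_mod_cast hLk h
        _ < ε := hL
    · choose s hsS hs using fun j i => mem_iUnion₂.1 (hES (hg j i))
      let h : Fin d → Fin n → S := fun j i => ⟨s j i, hsS j i⟩
      refine ⟨h, fun i j => ?_⟩
      linarith [dist_triangle_right (T^[(j.val + 1) * k h] (x i)) (g j i) (s j i),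
        hk h i j, mem_ball.1 (hs j i)]
  · calc hausdorffDist (range x) F ≤ 2 * (η / 3) :=
          hausdorffDist_range_le (by positivity) (fun i => htF ⟨i, rfl⟩) hFt
            fun i => (hx i).2.trans_le (min_le_right _ _)
      _ < η := by linarith

lemma DeltaWM.dense_setOf_spread (hT : Continuous T) (hwm : DeltaWM T E) (hE : TotallyBounded E)
    {ε : ℝ} (hε : 0 < ε) (d : ℕ) :
    Dense {F : {F : NonemptyCompacts X // (F : Set X) ⊆ E} | Spread T ε d (F.1 : Set X) E} := by
  refine Metric.dense_iff.2 fun F η hη => ?_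
  obtain ⟨n, x, hne, hxE, hspread, hdist⟩ :=
    hwm.exists_spread_finite_near hT hE hε d F.1.nonempty F.2 hη
  exact ⟨⟨⟨⟨range x, (finite_range x).isCompact⟩, hne⟩, hxE⟩,
    by rwa [mem_ball, Subtype.dist_eq, NonemptyCompacts.dist_eq], hspread⟩

lemma NonemptyCompacts.isOpen_setOf_subset {U : Set X} (hU : IsOpen U) :
    IsOpen {F : NonemptyCompacts X | (F : Set X) ⊆ U} := by
  refine Metric.isOpen_iff.2 fun (F : NonemptyCompacts X) (hFU : (F : Set X) ⊆ U) => ?_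
  obtain ⟨r, hr, hrU⟩ := F.isCompact.exists_thickening_subset_open hU hFU
  refine ⟨r, hr, fun F' hF' p hp => hrU (mem_thickening_iff.2 ?_)⟩
  refine exists_dist_lt_of_hausdorffDist_lt hp ?_ ?_
  · rw [← NonemptyCompacts.dist_eq]
    exact mem_ball.1 hF'
  · exact hausdorffEDist_ne_top_of_nonempty_of_bounded F'.nonempty F.nonempty
      F'.isCompact.isBounded F.isCompact.isBounded

lemma isOpen_setOf_spread (T : X → X) (ε : ℝ) (d : ℕ) (E : Set X) :
    IsOpen {F : NonemptyCompacts X | Spread T ε d (F : Set X) E} := by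
  refine isOpen_iff_forall_mem_open.2 fun F ⟨δ, hδ, hδε, n, z, hz, hFz, hg⟩ => ?_
  exact ⟨{F' | (F' : Set X) ⊆ ⋃ i, ball (z i) δ}, fun F' hF' => ⟨δ, hδ, hδε, n, z, hz, hF', hg⟩,
    NonemptyCompacts.isOpen_setOf_subset (isOpen_iUnion fun _ => isOpen_ball), hFz⟩

end Metric

theorem stmt9_general {X : Type*} [MetricSpace X] [CompactSpace X] (T : X → X)
    (hT : Continuous T) (E : Set X) (hwm : DeltaWM T E) :
    (∀ ε : ℝ, 0 < ε → ∀ d : ℕ,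
      IsOpen {F : NonemptyCompacts X | Spread T ε d (F : Set X) E} ∧
      Dense {F : {F : NonemptyCompacts X // (F : Set X) ⊆ E} |
        Spread T ε d (F.1 : Set X) E}) ∧
    {F : {F : NonemptyCompacts X // (F : Set X) ⊆ E} |
        ∀ d k : ℕ, 1 ≤ k → Spread T (1 / (k : ℝ)) d (F.1 : Set X) E} ∈
      residual {F : NonemptyCompacts X // (F : Set X) ⊆ E} := by
  have hE : TotallyBounded E := isCompact_univ.totallyBounded.subset (subset_univ E)
  refine ⟨fun ε hε d => ⟨isOpen_setOf_spread T ε d E, hwm.dense_setOf_spread hT hE hε d⟩, ?_⟩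
  refine eventually_countable_forall.2 fun d => eventually_countable_forall.2 fun k => ?_
  rcases Nat.eq_zero_or_pos k with rfl | hk
  · exact Eventually.of_forall fun _ h => absurd h (by norm_num)
  · have hopen := (isOpen_setOf_spread T (1 / (k : ℝ)) d E).preimage
      (continuous_subtype_val (p := fun F : NonemptyCompacts X => (F : Set X) ⊆ E))
    have hdense := hwm.dense_setOf_spread hT hE (by positivity : (0 : ℝ) < 1 / k) d
    exact mem_of_superset (residual_of_dense_open hopen hdense) fun _ hF _ => hF

theorem stmt9 {X : Type*} [MetricSpace X] [CompactSpace X] (T : X → X)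
    (hT : Continuous T) (E : Set X) (hE : IsClosed E) (hwm : DeltaWM T E) :
    (∀ ε : ℝ, 0 < ε → ∀ d : ℕ,
      IsOpen {F : NonemptyCompacts X | Spread T ε d (F : Set X) E} ∧
      Dense {F : {F : NonemptyCompacts X // (F : Set X) ⊆ E} |
        Spread T ε d (F.1 : Set X) E}) ∧
    {F : {F : NonemptyCompacts X // (F : Set X) ⊆ E} |
        ∀ d k : ℕ, 1 ≤ k → Spread T (1 / (k : ℝ)) d (F.1 : Set X) E} ∈
      residual {F : NonemptyCompacts X // (F : Set X) ⊆ E} :=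
  stmt9_general T hT E hwm
end

section
/- Let (X,T) be a dynamical system, E ⊆ X closed, and let C be a closed subset of X such that for every ε > 0 and d ∈ ℕ, C is (ε,d)-spread in E. Then for any closed subset B of C, any d ∈ ℕ, and any continuous functions h_j : B → E (j = 1,…,d), there exists an increasing sequence (q_k) of positive integers such that T^{j·q_k} x → h_j(x) as k → ∞, uniformly in x ∈ B, for each j = 1,…,d. -/
theorem stmt10 {X : Type*} [MetricSpace X] [CompactSpace X] (T : X → X)
    (hT : Continuous T) (E C : Set X) (hE : IsClosed E) (hC : IsClosed C)
    (hspread : ∀ ε : ℝ, 0 < ε → ∀ d : ℕ, Spread T ε d C E) :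
    ∀ B : Set X, B ⊆ C → IsClosed B → ∀ d : ℕ, ∀ h : Fin d → X → X,
      (∀ j, ContinuousOn (h j) B) → (∀ j, ∀ x ∈ B, h j x ∈ E) →
      ∃ q : ℕ → ℕ, StrictMono q ∧ (∀ k, 1 ≤ q k) ∧
        ∀ j : Fin d,
          TendstoUniformlyOn (fun k x => T^[(j.val + 1) * q k] x) (h j) Filter.atTop B := by
  intro B hBC hBcl d h hcont hmem
  rcases B.eq_empty_or_nonempty with hBe | ⟨x0, hx0⟩
  · refine ⟨fun k => k + 1, fun a b hab => Nat.add_lt_add_right hab 1,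
      fun k => Nat.succ_le_succ (Nat.zero_le k), ?_⟩
    intro j u hu
    filter_upwards with k x hx
    rw [hBe] at hx
    exact absurd hx (Set.notMem_empty x)
  · classical
    have hBcomp : IsCompact B := hBcl.isCompact
    set H : X → (Fin d → X) := fun x j => h j x with hH
    have hHuc : UniformContinuousOn H B :=
      hBcomp.uniformContinuousOn_of_continuous (continuousOn_pi.mpr hcont)
    rw [Metric.uniformContinuousOn_iff] at hHuc
    have claim : ∀ m : ℕ, ∃ k : ℕ, m < k ∧
        ∀ x ∈ B, ∀ j : Fin d, dist (T^[(j.val + 1) * k] x) (h j x) < 1 / (m + 1) := by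
      intro m
      have hηpos : (0:ℝ) < 1 / (m + 1) / 2 := by positivity
      obtain ⟨δ', hδ'pos, hδ'⟩ := hHuc _ hηpos
      set ε := min (1 / ((m:ℝ) + 1) / 2) (δ' / 2) with hεdef
      have hεpos : 0 < ε := lt_min hηpos (by positivity)
      obtain ⟨δ, hδ0, hδε, n, z, hinj, hcover, hg⟩ := hspread ε hεpos d
      set pt : Fin n → X := fun i =>
        if hp : (B ∩ Metric.ball (z i) δ).Nonempty then hp.choose else x0 with hpt
      have hptB : ∀ i, pt i ∈ B := by
        intro i
        by_cases hp : (B ∩ Metric.ball (z i) δ).Nonempty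
        · simp only [hpt, dif_pos hp]; exact hp.choose_spec.1
        · simp only [hpt, dif_neg hp]; exact hx0
      obtain ⟨k, hk1, hkε, hball⟩ := hg (fun j i => h j (pt i))
        (fun j i => hmem j _ (hptB i))
      have hk0 : (0:ℝ) < k := by exact_mod_cast hk1
      refine ⟨k, ?_, ?_⟩
      · have h1 : (1:ℝ)/k < 1/((m:ℝ)+1) := by
          refine lt_of_lt_of_le (lt_of_lt_of_le hkε (min_le_left _ _)) ?_
          have : (0:ℝ) < (m:ℝ) + 1 := by positivity
          nlinarith [one_div_pos.mpr this]
        have h2 : ((m:ℝ)+1) < k := by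
          rw [div_lt_div_iff₀ hk0 (by positivity)] at h1; linarith
        have : (m+1 : ℕ) < k := by exact_mod_cast (by push_cast; linarith : ((m+1:ℕ):ℝ) < (k:ℝ))
        omega
      · intro x hxB j
        obtain ⟨i, hxi⟩ := Set.mem_iUnion.mp (hcover (hBC hxB))
        have hne : (B ∩ Metric.ball (z i) δ).Nonempty := ⟨x, hxB, hxi⟩
        have hpti : pt i ∈ B ∩ Metric.ball (z i) δ := by
          simp only [hpt, dif_pos hne]; exact hne.choose_spec
        have h1 : dist (T^[(j.val+1)*k] x) (h j (pt i)) < ε :=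
          hball i j ⟨x, hxi, rfl⟩
        have hd1 : dist x (z i) < δ := Metric.mem_ball.mp hxi
        have hd2 : dist (pt i) (z i) < δ := Metric.mem_ball.mp hpti.2
        have hεδ' : ε ≤ δ'/2 := min_le_right _ _
        have hdxy : dist x (pt i) < δ' := by
          calc dist x (pt i) ≤ dist x (z i) + dist (z i) (pt i) := dist_triangle _ _ _
            _ < δ + δ := by rw [dist_comm (z i)]; exact add_lt_add hd1 hd2
            _ ≤ δ'/2 + δ'/2 := by have := le_trans hδε.le hεδ'; linarith
            _ = δ' := by ring
        have h2 : dist (h j x) (h j (pt i)) < 1/((m:ℝ)+1)/2 :=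
          lt_of_le_of_lt (dist_le_pi_dist (H x) (H (pt i)) j)
            (hδ' x hxB (pt i) hpti.1 hdxy)
        have hεη : ε ≤ 1/((m:ℝ)+1)/2 := min_le_left _ _
        calc dist (T^[(j.val+1)*k] x) (h j x)
            ≤ dist (T^[(j.val+1)*k] x) (h j (pt i)) + dist (h j (pt i)) (h j x) :=
              dist_triangle _ _ _
          _ < ε + 1/((m:ℝ)+1)/2 := add_lt_add h1 (by rwa [dist_comm] at h2)
          _ ≤ 1/((m:ℝ)+1)/2 + 1/((m:ℝ)+1)/2 := by linarith
          _ = 1/((m:ℝ)+1) := by ring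
    choose f hf1 hf2 using claim
    set msq : ℕ → ℕ := fun s => f^[s] 0 with hmsq
    have hstep : ∀ s, msq (s+1) = f (msq s) := fun s => Function.iterate_succ_apply' f s 0
    have hmono : StrictMono msq := by
      apply strictMono_nat_of_lt_succ
      intro s
      rw [hstep s]
      exact hf1 (msq s)
    have hle : ∀ s, s ≤ msq s := fun s => hmono.le_apply
    refine ⟨fun s => f (msq s), ?_, ?_, ?_⟩
    · apply strictMono_nat_of_lt_succ
      intro s
      calc f (msq s) = msq (s+1) := (hstep s).symm
        _ < f (msq (s+1)) := hf1 _
    · intro s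
      show 1 ≤ f (msq s)
      have := hf1 (msq s); omega
    · intro j
      rw [Metric.tendstoUniformlyOn_iff]
      intro ε' hε'
      obtain ⟨N, hN⟩ := exists_nat_one_div_lt hε'
      filter_upwards [Filter.eventually_ge_atTop N] with s hs x hxB
      have hms : (N:ℝ) ≤ (msq s : ℝ) := by exact_mod_cast le_trans hs (hle s)
      rw [dist_comm]
      calc dist (T^[(j.val+1) * f (msq s)] x) (h j x) < 1/((msq s : ℝ) + 1) :=
            hf2 (msq s) x hxB j
        _ ≤ 1/((N:ℝ)+1) := by
            apply one_div_le_one_div_of_le (by positivity)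
            linarith
        _ < ε' := hN
end

section
/- Let (X,T) be a dynamical system that is proximal (every pair of points is proximal) and uniformly rigid (there is an increasing sequence n_k with sup_{x∈X} ρ(T^{n_k}x, x) → 0), and suppose T^r is transitive for each r ≥ 1 (in particular every point is recurrent under T^r). Then for all r, s ∈ ℕ with r ≠ s, Asy(T^r, T^s) ⊆ Δ_X, i.e., if lim_{n→∞} ρ(T^{rn}x, T^{sn}y) = 0 then x = y. -/
theorem stmt15 {X : Type*} [MetricSpace X] [CompactSpace X] (T : X → X)
    (hT : Continuous T)
    (hprox : ∀ x y : X,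
      Filter.liminf (fun n : ℕ => dist (T^[n] x) (T^[n] y)) Filter.atTop = 0)
    (hrigid : ∃ u : ℕ → ℕ, StrictMono u ∧ (∀ k, 1 ≤ u k) ∧
      TendstoUniformly (fun k x => T^[u k] x) id Filter.atTop)
    (htrans : ∀ r : ℕ, 1 ≤ r → ∀ U V : Set X, IsOpen U → U.Nonempty → IsOpen V → V.Nonempty →
      ∃ n : ℕ, 1 ≤ n ∧ ∃ x ∈ U, T^[r * n] x ∈ V) :
    ∀ r s : ℕ, 1 ≤ r → 1 ≤ s → r ≠ s → ∀ x y : X,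
      Filter.Tendsto (fun n : ℕ => dist (T^[r * n] x) (T^[s * n] y)) Filter.atTop (nhds 0) →
      x = y := by
  obtain ⟨u, hu, hu1, hunif⟩ := hrigid
  intro r s hr hs hrs x y hxy
  have hunif' := Metric.tendstoUniformly_iff.mp hunif
  have key : ∀ m : ℕ, TendstoUniformly (fun k z => T^[m * u k] z) id Filter.atTop := by
    intro m
    induction m with
    | zero =>
      rw [Metric.tendstoUniformly_iff]
      intro ε hε
      filter_upwards with k z
      simpa using hε
    | succ m ih =>
      have ih' := Metric.tendstoUniformly_iff.mp ih
      rw [Metric.tendstoUniformly_iff]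
      intro ε hε
      filter_upwards [ih' (ε / 2) (by positivity), hunif' (ε / 2) (by positivity)]
        with k h1 h2 z
      have heq : T^[(m + 1) * u k] z = T^[u k] (T^[m * u k] z) := by
        rw [add_mul, one_mul, add_comm, Function.iterate_add_apply]
      rw [heq]
      calc dist (id z) (T^[u k] (T^[m * u k] z))
          ≤ dist (id z) (T^[m * u k] z) + dist (T^[m * u k] z) (T^[u k] (T^[m * u k] z)) :=
            dist_triangle _ _ _
        _ < ε / 2 + ε / 2 := by
            have := h2 (T^[m * u k] z)
            exact add_lt_add (h1 z) (by simpa using this)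
        _ = ε := by ring
  have hxlim : Filter.Tendsto (fun k => T^[r * u k] x) Filter.atTop (nhds x) :=
    (key r).tendsto_at x
  have hylim : Filter.Tendsto (fun k => T^[s * u k] y) Filter.atTop (nhds y) :=
    (key s).tendsto_at y
  have hdist : Filter.Tendsto (fun k => dist (T^[r * u k] x) (T^[s * u k] y))
      Filter.atTop (nhds (dist x y)) := hxlim.dist hylim
  have hzero : Filter.Tendsto (fun k => dist (T^[r * u k] x) (T^[s * u k] y))
      Filter.atTop (nhds 0) := hxy.comp hu.tendsto_atTop
  exact eq_of_dist_eq_zero (tendsto_nhds_unique hdist hzero)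
end

section
/- Let X be a perfect compact metric space and let Q ⊆ 2^X be a hereditary subset of the hyperspace (meaning 2^A ⊆ Q for every A ∈ Q) which is residual in 2^X. Then there exists an increasing sequence of Cantor sets C_1 ⊆ C_2 ⊆ ⋯ ⊆ X with C_i ∈ Q for every i ≥ 1 and ⋃_{i=1}^∞ C_i dense in X. -/
/-!
Write the residual set as containing `⋂ n, U n` with every `U n` open and dense. We build, stage
by stage, finite families of pairwise disjoint closed balls carrying labels in `ℕ`. Passing to the
next stage, every ball is replaced by at least two smaller balls of the same label inside it, and
new balls of a new label are added in the gaps, so that every point comes close to some ball.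
Moreover, since `U n` is dense in the Vietoris topology and finite sets are dense, the balls of
label `≤ j` can be shrunk around a finite set in `U n` in such a way that every compact set lying
in their union and meeting each of them belongs to `U n`. The set `C j` of points that lie in a
ball of label `≤ j` at every stage is then a Cantor set lying in every `U n`; it grows with `j`,
and the new labels make `⋃ j, C j` dense.
-/

open TopologicalSpace Metric Set Filter Topology

namespace ResidualCantor

section SplittingScheme

variable {X ι : Type*} [MetricSpace X]

structure IsSplittingScheme (S : ℕ → Finset ι) (b : ι → Set X) : Prop where
  isClosed : ∀ t, ∀ i ∈ S t, IsClosed (b i)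
  nonempty : ∀ t, ∀ i ∈ S t, (b i).Nonempty
  pairwiseDisjoint : ∀ t, (S t : Set ι).PairwiseDisjoint b
  exists_parent : ∀ t, ∀ i ∈ S (t + 1), ∃ k ∈ S t, b i ⊆ b k
  exists_two_children : ∀ t, ∀ k ∈ S t,
    ∃ i ∈ S (t + 1), ∃ i' ∈ S (t + 1), i ≠ i' ∧ b i ⊆ b k ∧ b i' ⊆ b k
  small : ∀ ε > 0, ∃ t, ∀ i ∈ S t, ∀ x ∈ b i, ∀ y ∈ b i, dist x y < ε

def limitSet (S : ℕ → Finset ι) (b : ι → Set X) : Set X := ⋂ t, ⋃ i ∈ S t, b i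

namespace IsSplittingScheme

variable {S : ℕ → Finset ι} {b : ι → Set X}

lemma isClosed_biUnion (hS : IsSplittingScheme S b) (t : ℕ) : IsClosed (⋃ i ∈ S t, b i) :=
  (S t).finite_toSet.isClosed_biUnion (hS.isClosed t)

lemma isClosed_limitSet (hS : IsSplittingScheme S b) : IsClosed (limitSet S b) :=
  isClosed_iInter hS.isClosed_biUnion

lemma biUnion_subset_of_le (hS : IsSplittingScheme S b) {t t' : ℕ} (h : t ≤ t') :
    ⋃ i ∈ S t', b i ⊆ ⋃ i ∈ S t, b i := by
  induction t', h using Nat.le_induction with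
  | base => exact subset_rfl
  | succ n _ ih =>
    refine Subset.trans (iUnion₂_subset fun i hi => ?_) ih
    obtain ⟨k, hk, hik⟩ := hS.exists_parent n i hi
    exact hik.trans (subset_biUnion_of_mem (u := b) hk)

lemma exists_descendant (hS : IsSplittingScheme S b) {t : ℕ} {i : ι} (hi : i ∈ S t) (s : ℕ) :
    ∃ k ∈ S (t + s), b k ⊆ b i := by
  induction s with
  | zero => exact ⟨i, hi, subset_rfl⟩
  | succ s ih =>
    obtain ⟨k, hk, hki⟩ := ih
    obtain ⟨k', hk', -, -, -, hk'k, -⟩ := hS.exists_two_children _ k hk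
    exact ⟨k', hk', hk'k.trans hki⟩

lemma limitSet_inter_nonempty [CompactSpace X] (hS : IsSplittingScheme S b) {t : ℕ} {i : ι}
    (hi : i ∈ S t) : (limitSet S b ∩ b i).Nonempty := by
  let Z : ℕ → Set X := fun n => b i ∩ ⋃ k ∈ S n, b k
  have hZne : ∀ n, (Z n).Nonempty := fun n => by
    obtain ⟨k, hk, hki⟩ := hS.exists_descendant hi n
    obtain ⟨x, hx⟩ := hS.nonempty _ k hk
    exact ⟨x, hki hx, hS.biUnion_subset_of_le (Nat.le_add_left n t) (mem_biUnion hk hx)⟩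
  obtain ⟨x, hx⟩ := IsCompact.nonempty_iInter_of_sequence_nonempty_isCompact_isClosed Z
    (fun n => inter_subset_inter_right _ (hS.biUnion_subset_of_le n.le_succ)) hZne
    ((hS.isClosed t i hi).inter (hS.isClosed_biUnion 0)).isCompact
    (fun n => (hS.isClosed t i hi).inter (hS.isClosed_biUnion n))
  rw [mem_iInter] at hx
  exact ⟨x, mem_iInter.2 fun n => (hx n).2, (hx 0).1⟩

lemma limitSet_nonempty [CompactSpace X] (hS : IsSplittingScheme S b) (h : (S 0).Nonempty) :
    (limitSet S b).Nonempty :=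
  let ⟨_, hi⟩ := h
  (hS.limitSet_inter_nonempty hi).mono inter_subset_left

lemma perfect_limitSet [CompactSpace X] (hS : IsSplittingScheme S b) :
    Perfect (limitSet S b) := by
  refine ⟨hS.isClosed_limitSet, fun x hx => accPt_iff_nhds.2 fun V hV => ?_⟩
  obtain ⟨ε, hε, hεV⟩ := Metric.mem_nhds_iff.1 hV
  obtain ⟨t, ht⟩ := hS.small ε hε
  obtain ⟨k, hk, hxk⟩ := mem_iUnion₂.1 (mem_iInter.1 hx t)
  obtain ⟨i, hi, i', hi', hne, hik, hi'k⟩ := hS.exists_two_children t k hk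
  obtain ⟨c, hc, hxc, hck⟩ : ∃ c ∈ S (t + 1), x ∉ b c ∧ b c ⊆ b k := by
    by_cases hxi : x ∈ b i
    · exact ⟨i', hi', disjoint_left.1 (hS.pairwiseDisjoint (t + 1) hi hi' hne) hxi, hi'k⟩
    · exact ⟨i, hi, hxi, hik⟩
  obtain ⟨y, hyC, hyc⟩ := hS.limitSet_inter_nonempty hc
  exact ⟨y, ⟨hεV (ht k hk y (hck hyc) x hxk), hyC⟩, fun h => hxc (h ▸ hyc)⟩

lemma isTotallyDisconnected_limitSet (hS : IsSplittingScheme S b) :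
    IsTotallyDisconnected (limitSet S b) := by
  classical
  refine isTotallyDisconnected_of_isTotallySeparated fun x hx y hy hxy => ?_
  obtain ⟨t, ht⟩ := hS.small (dist x y) (dist_pos.2 hxy)
  obtain ⟨k, hk, hxk⟩ := mem_iUnion₂.1 (mem_iInter.1 hx t)
  have hR : IsClosed (⋃ i ∈ (S t).erase k, b i) :=
    ((S t).erase k).finite_toSet.isClosed_biUnion
      fun i hi => hS.isClosed t i (Finset.mem_of_mem_erase hi)
  have hdisj : Disjoint (b k) (⋃ i ∈ (S t).erase k, b i) :=
    disjoint_iUnion₂_right.2 fun i hi => hS.pairwiseDisjoint t hk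
      (Finset.mem_of_mem_erase hi) (Finset.ne_of_mem_erase hi).symm
  have hrest : ∀ z ∈ limitSet S b, z ∉ b k → z ∈ ⋃ i ∈ (S t).erase k, b i := fun z hz hzk => by
    obtain ⟨i, hi, hzi⟩ := mem_iUnion₂.1 (mem_iInter.1 hz t)
    exact mem_biUnion (Finset.mem_erase.2 ⟨fun h => hzk (h ▸ hzi), hi⟩) hzi
  obtain ⟨u, v, hu, hv, hku, hRv, huv⟩ := normal_separation (hS.isClosed t k hk) hR hdisj
  refine ⟨u, v, hu, hv, hku hxk, hRv (hrest y hy fun hyk => ?_), fun z hz => ?_, huv⟩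
  · exact (ht k hk x hxk y hyk).false
  · by_cases hzk : z ∈ b k
    · exact Or.inl (hku hzk)
    · exact Or.inr (hRv (hrest z hz hzk))

end IsSplittingScheme

end SplittingScheme

structure LabelledBall (X : Type*) where
  center : X
  radius : ℝ
  label : ℕ

section Truncate

variable {X : Type*}

def truncate (j : ℕ) (F : Finset (LabelledBall X)) : Finset (LabelledBall X) :=
  F.filter (·.label ≤ j)

variable {j k : ℕ} {F : Finset (LabelledBall X)} {p : LabelledBall X}

lemma mem_truncate : p ∈ truncate j F ↔ p ∈ F ∧ p.label ≤ j := Finset.mem_filter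

lemma truncate_subset : truncate j F ⊆ F := Finset.filter_subset _ _

lemma truncate_mono (h : j ≤ k) : truncate j F ⊆ truncate k F := fun _ hp =>
  mem_truncate.2 ⟨(mem_truncate.1 hp).1, (mem_truncate.1 hp).2.trans h⟩

lemma truncate_truncate (h : j ≤ k) : truncate j (truncate k F) = truncate j F := by
  ext p
  simp only [mem_truncate, and_assoc, and_iff_right_iff_imp.2 fun hp : p.label ≤ j => hp.trans h]

end Truncate

section LabelledBalls

variable {X : Type*} [MetricSpace X]

def LabelledBall.ball (p : LabelledBall X) : Set X := closedBall p.center p.radius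

instance : Preorder (LabelledBall X) where
  le q p := q.label = p.label ∧ q.ball ⊆ p.ball
  le_refl _ := ⟨rfl, subset_rfl⟩
  le_trans _ _ _ h h' := ⟨h.1.trans h'.1, h.2.trans h'.2⟩

structure IsDisjointFamily (F : Finset (LabelledBall X)) : Prop where
  radius_pos : ∀ p ∈ F, 0 < p.radius
  pairwiseDisjoint : (F : Set (LabelledBall X)).PairwiseDisjoint LabelledBall.ball

def carrier (F : Finset (LabelledBall X)) : Set X := ⋃ p ∈ F, p.ball

def vietorisSet (F : Finset (LabelledBall X)) : Set (NonemptyCompacts X) :=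
  {L | (L : Set X) ⊆ carrier F ∧ ∀ p ∈ F, ((L : Set X) ∩ p.ball).Nonempty}

def Refines (G F : Finset (LabelledBall X)) : Prop :=
  (∀ q ∈ G, ∃ p ∈ F, q ≤ p) ∧ ∀ p ∈ F, ∃ q ∈ G, q ≤ p

def Splits (G F : Finset (LabelledBall X)) : Prop :=
  (∀ q ∈ G, ∃ p ∈ F, q ≤ p) ∧ ∀ p ∈ F, ∃ q ∈ G, ∃ q' ∈ G, q ≠ q' ∧ q ≤ p ∧ q' ≤ p

variable {F G H : Finset (LabelledBall X)} {p : LabelledBall X}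

lemma IsDisjointFamily.mono (hF : IsDisjointFamily F) (h : G ⊆ F) : IsDisjointFamily G :=
  ⟨fun p hp => hF.radius_pos p (h hp), hF.pairwiseDisjoint.subset (Finset.coe_subset.2 h)⟩

lemma IsDisjointFamily.insert [DecidableEq (LabelledBall X)] (hF : IsDisjointFamily F)
    (hp : 0 < p.radius) (hdisj : ∀ q ∈ F, Disjoint p.ball q.ball) :
    IsDisjointFamily (insert p F) := by
  refine ⟨Finset.forall_mem_insert _ _ _ |>.2 ⟨hp, hF.radius_pos⟩, ?_⟩
  rw [Finset.coe_insert]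
  exact hF.pairwiseDisjoint.insert fun q hq _ => hdisj q hq

lemma IsDisjointFamily.biUnion [DecidableEq (LabelledBall X)] (hF : IsDisjointFamily F)
    {C : LabelledBall X → Finset (LabelledBall X)} (hC : ∀ p ∈ F, IsDisjointFamily (C p))
    (hle : ∀ p ∈ F, ∀ q ∈ C p, q ≤ p) : IsDisjointFamily (F.biUnion C) := by
  refine ⟨fun q hq => ?_, fun q hq q' hq' hne => ?_⟩
  · obtain ⟨p, hp, hqp⟩ := Finset.mem_biUnion.1 hq
    exact (hC p hp).radius_pos q hqp
  · obtain ⟨p, hp, hqp⟩ := Finset.mem_biUnion.1 hq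
    obtain ⟨p', hp', hqp'⟩ := Finset.mem_biUnion.1 hq'
    by_cases hpp : p = p'
    · subst hpp
      exact (hC p hp).pairwiseDisjoint hqp hqp' hne
    · exact (hF.pairwiseDisjoint hp hp' hpp).mono (hle p hp q hqp).2 (hle p' hp' q' hqp').2

lemma vietorisSet_empty : vietorisSet (∅ : Finset (LabelledBall X)) = ∅ :=
  eq_empty_of_forall_notMem fun L hL => by
    simpa [carrier] using L.nonempty.mono hL.1

lemma Refines.refl (F : Finset (LabelledBall X)) : Refines F F :=
  ⟨fun p hp => ⟨p, hp, le_rfl⟩, fun p hp => ⟨p, hp, le_rfl⟩⟩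

lemma Refines.trans (hGF : Refines G F) (hHG : Refines H G) : Refines H F := by
  refine ⟨fun r hr => ?_, fun p hp => ?_⟩
  · obtain ⟨q, hq, hrq⟩ := hHG.1 r hr
    obtain ⟨p, hp, hqp⟩ := hGF.1 q hq
    exact ⟨p, hp, hrq.trans hqp⟩
  · obtain ⟨q, hq, hqp⟩ := hGF.2 p hp
    obtain ⟨r, hr, hrq⟩ := hHG.2 q hq
    exact ⟨r, hr, hrq.trans hqp⟩

lemma Splits.refines (h : Splits G F) : Refines G F :=
  ⟨h.1, fun p hp => let ⟨q, hq, _, _, _, hqp, _⟩ := h.2 p hp; ⟨q, hq, hqp⟩⟩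

lemma Refines.trans_splits (hGF : Refines G F) (hHG : Splits H G) : Splits H F := by
  refine ⟨(hGF.trans hHG.refines).1, fun p hp => ?_⟩
  obtain ⟨q, hq, hqp⟩ := hGF.2 p hp
  obtain ⟨r, hr, r', hr', hne, hrq, hr'q⟩ := hHG.2 q hq
  exact ⟨r, hr, r', hr', hne, hrq.trans hqp, hr'q.trans hqp⟩

lemma Refines.truncate (h : Refines G F) (j : ℕ) : Refines (truncate j G) (truncate j F) := by
  refine ⟨fun q hq => ?_, fun p hp => ?_⟩
  · obtain ⟨hqG, hqj⟩ := mem_truncate.1 hq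
    obtain ⟨p, hp, hqp⟩ := h.1 q hqG
    exact ⟨p, mem_truncate.2 ⟨hp, hqp.1 ▸ hqj⟩, hqp⟩
  · obtain ⟨hpF, hpj⟩ := mem_truncate.1 hp
    obtain ⟨q, hq, hqp⟩ := h.2 p hpF
    exact ⟨q, mem_truncate.2 ⟨hq, hqp.1 ▸ hpj⟩, hqp⟩

lemma Splits.truncate (h : Splits G F) (j : ℕ) : Splits (truncate j G) (truncate j F) := by
  refine ⟨(h.refines.truncate j).1, fun p hp => ?_⟩
  obtain ⟨hpF, hpj⟩ := mem_truncate.1 hp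
  obtain ⟨q, hq, q', hq', hne, hqp, hq'p⟩ := h.2 p hpF
  exact ⟨q, mem_truncate.2 ⟨hq, hqp.1 ▸ hpj⟩, q', mem_truncate.2 ⟨hq', hq'p.1 ▸ hpj⟩, hne,
    hqp, hq'p⟩

lemma Refines.vietorisSet_subset (h : Refines G F) : vietorisSet G ⊆ vietorisSet F := by
  rintro L ⟨hLG, hLmeets⟩
  refine ⟨hLG.trans (iUnion₂_subset fun q hq => ?_), fun p hp => ?_⟩
  · obtain ⟨p, hp, hqp⟩ := h.1 q hq
    exact hqp.2.trans (subset_biUnion_of_mem (u := LabelledBall.ball) hp)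
  · obtain ⟨q, hq, hqp⟩ := h.2 p hp
    exact (hLmeets q hq).mono (inter_subset_inter_right _ hqp.2)

end LabelledBalls

section Constructions

variable {X : Type*} [MetricSpace X] {F : Finset (LabelledBall X)}

lemma refines_biUnion [DecidableEq (LabelledBall X)]
    {C : LabelledBall X → Finset (LabelledBall X)} (hle : ∀ p ∈ F, ∀ q ∈ C p, q ≤ p)
    (hne : ∀ p ∈ F, (C p).Nonempty) :
    Refines (F.biUnion C) F := by
  refine ⟨fun q hq => ?_, fun p hp => ?_⟩
  · obtain ⟨p, hp, hqp⟩ := Finset.mem_biUnion.1 hq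
    exact ⟨p, hp, hle p hp q hqp⟩
  · obtain ⟨q, hq⟩ := hne p hp
    exact ⟨q, Finset.mem_biUnion.2 ⟨p, hp, hq⟩, hle p hp q hq⟩

lemma splits_biUnion [DecidableEq (LabelledBall X)]
    {C : LabelledBall X → Finset (LabelledBall X)} (hle : ∀ p ∈ F, ∀ q ∈ C p, q ≤ p)
    (htwo : ∀ p ∈ F, ∃ q ∈ C p, ∃ q' ∈ C p, q ≠ q') :
    Splits (F.biUnion C) F := by
  refine ⟨(refines_biUnion hle fun p hp => ?_).1, fun p hp => ?_⟩
  · obtain ⟨q, hq, -⟩ := htwo p hp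
    exact ⟨q, hq⟩
  · obtain ⟨q, hq, q', hq', hne⟩ := htwo p hp
    exact ⟨q, Finset.mem_biUnion.2 ⟨p, hp, hq⟩, q', Finset.mem_biUnion.2 ⟨p, hp, hq'⟩, hne,
      hle p hp q hq, hle p hp q' hq'⟩

lemma exists_ne_dist_lt (hperf : Perfect (univ : Set X)) (x : X) {ε : ℝ} (hε : 0 < ε) :
    ∃ y ≠ x, dist y x < ε := by
  obtain ⟨y, hy, hyx⟩ := accPt_iff_nhds.1 (hperf.acc x (mem_univ x)) _ (ball_mem_nhds x hε)
  exact ⟨y, hyx, hy.1⟩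

lemma exists_two_children (hperf : Perfect (univ : Set X)) {p : LabelledBall X}
    (hp : 0 < p.radius) {δ : ℝ} (hδ : 0 < δ) :
    ∃ C : Finset (LabelledBall X), IsDisjointFamily C ∧ (∀ q ∈ C, q ≤ p ∧ q.radius ≤ δ) ∧
      ∃ q ∈ C, ∃ q' ∈ C, q ≠ q' := by
  classical
  obtain ⟨y, hyc, hy⟩ := exists_ne_dist_lt hperf p.center (half_pos (lt_min hδ hp))
  have hd : 0 < dist y p.center := dist_pos.2 hyc
  have hmin := min_le_left δ p.radius
  have hmin' := min_le_right δ p.radius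
  let s := dist y p.center / 3
  let q : LabelledBall X := ⟨p.center, s, p.label⟩
  let q' : LabelledBall X := ⟨y, s, p.label⟩
  have hqq' : q ≠ q' := fun h => hyc (congrArg LabelledBall.center h).symm
  refine ⟨{q, q'}, ⟨?_, ?_⟩, ?_, q, by simp, q', by simp, hqq'⟩
  · simp only [Finset.mem_insert, Finset.mem_singleton, forall_eq_or_imp, forall_eq]
    exact ⟨by positivity, by positivity⟩
  · rw [Finset.coe_pair]
    refine Set.pairwise_pair.2 fun _ => ⟨?_, ?_⟩ <;>
    · refine closedBall_disjoint_closedBall ?_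
      have := dist_comm y p.center
      simp only [q, q', s]
      linarith
  · simp only [Finset.mem_insert, Finset.mem_singleton, forall_eq_or_imp, forall_eq]
    refine ⟨⟨⟨rfl, closedBall_subset_closedBall ?_⟩, ?_⟩,
      ⟨rfl, closedBall_subset_closedBall' ?_⟩, ?_⟩ <;> simp only [q, q', s] <;> linarith

lemma exists_splits_radius_le (hperf : Perfect (univ : Set X)) (hF : IsDisjointFamily F) {δ : ℝ}
    (hδ : 0 < δ) : ∃ G, IsDisjointFamily G ∧ Splits G F ∧ ∀ q ∈ G, q.radius ≤ δ := by
  classical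
  choose! C hC hCle hCtwo using fun p (hp : p ∈ F) =>
    exists_two_children hperf (hF.radius_pos p hp) hδ
  refine ⟨F.biUnion C, hF.biUnion hC fun p hp q hq => (hCle p hp q hq).1,
    splits_biUnion (fun p hp q hq => (hCle p hp q hq).1) hCtwo, fun q hq => ?_⟩
  obtain ⟨p, hp, hqp⟩ := Finset.mem_biUnion.1 hq
  exact (hCle p hp q hqp).2

lemma exists_superset_near_finset (hF : IsDisjointFamily F) {η : ℝ} (hη : 0 < η)
    (hr : ∀ p ∈ F, p.radius ≤ η) (l : ℕ) (N : Finset X) :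
    ∃ G, F ⊆ G ∧ IsDisjointFamily G ∧ (∀ q ∈ G, q ∉ F → q.label = l) ∧
      (∀ q ∈ G, q.radius ≤ η) ∧ ∀ a ∈ N, ∃ q ∈ G, q.ball ⊆ closedBall a (3 * η) := by
  classical
  induction N using Finset.induction_on with
  | empty => exact ⟨F, subset_rfl, hF, fun q hq hqF => (hqF hq).elim, hr, by simp⟩
  | insert a N _ ih =>
    obtain ⟨G, hFG, hG, hnew, hGr, hnear⟩ := ih
    by_cases hdisj : ∀ q ∈ G, Disjoint (closedBall a η) q.ball
    · let p : LabelledBall X := ⟨a, η, l⟩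
      refine ⟨insert p G, hFG.trans (Finset.subset_insert _ _), hG.insert (p := p) hη hdisj,
        fun q hq hqF => ?_, Finset.forall_mem_insert _ _ _ |>.2 ⟨le_rfl, hGr⟩,
        Finset.forall_mem_insert _ _ _ |>.2 ⟨⟨p, Finset.mem_insert_self _ _, ?_⟩, fun b hb => ?_⟩⟩
      · rcases Finset.mem_insert.1 hq with rfl | hq
        · rfl
        · exact hnew q hq hqF
      · exact closedBall_subset_closedBall (by linarith)
      · obtain ⟨q, hq, hqb⟩ := hnear b hb
        exact ⟨q, Finset.mem_insert_of_mem hq, hqb⟩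
    · push Not at hdisj
      obtain ⟨q, hq, hmeet⟩ := hdisj
      obtain ⟨y, hya, hyq⟩ := not_disjoint_iff.1 hmeet
      refine ⟨G, hFG, hG, hnew, hGr, Finset.forall_mem_insert _ _ _ |>.2
        ⟨⟨q, hq, closedBall_subset_closedBall' ?_⟩, hnear⟩⟩
      have := dist_triangle q.center y a
      have := hGr q hq
      rw [mem_closedBall] at hya
      rw [LabelledBall.ball, mem_closedBall'] at hyq
      linarith

lemma exists_superset_near [CompactSpace X] (hF : IsDisjointFamily F) {η : ℝ} (hη : 0 < η)
    (hr : ∀ p ∈ F, p.radius ≤ η) (l : ℕ) :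
    ∃ G, F ⊆ G ∧ IsDisjointFamily G ∧ (∀ q ∈ G, q ∉ F → q.label = l) ∧
      ∀ x, ∃ q ∈ G, q.ball ⊆ closedBall x (4 * η) := by
  obtain ⟨N, -, hNfin, hN⟩ := finite_cover_balls_of_compact (isCompact_univ (X := X)) hη
  obtain ⟨G, hFG, hG, hnew, -, hnear⟩ := exists_superset_near_finset hF hη hr l hNfin.toFinset
  refine ⟨G, hFG, hG, hnew, fun x => ?_⟩
  obtain ⟨a, ha, hxa⟩ := mem_iUnion₂.1 (hN (mem_univ x))
  obtain ⟨q, hq, hqa⟩ := hnear a (hNfin.mem_toFinset.2 ha)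
  refine ⟨q, hq, hqa.trans (closedBall_subset_closedBall' ?_)⟩
  rw [mem_ball, dist_comm] at hxa
  linarith

lemma exists_finite_mem_meets_balls {U : Set (NonemptyCompacts X)} (hUo : IsOpen U) (hUd : Dense U)
    {A : Finset (LabelledBall X)} (hA : A.Nonempty) (hr : ∀ p ∈ A, 0 < p.radius) :
    ∃ K ∈ U, (K : Set X).Finite ∧ (∀ y ∈ K, ∃ p ∈ A, y ∈ ball p.center p.radius) ∧
      ∀ p ∈ A, ∃ y ∈ K, y ∈ ball p.center p.radius := by
  classical
  let V : Set (NonemptyCompacts X) := {K | (K : Set X) ⊆ ⋃ p ∈ A, ball p.center p.radius} ∩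
    ⋂ p ∈ A, {K | ((K : Set X) ∩ ball p.center p.radius).Nonempty}
  have hVo : IsOpen V :=
    (NonemptyCompacts.isOpen_subsets_of_isOpen (isOpen_biUnion fun _ _ => isOpen_ball)).inter
      (isOpen_biInter_finset fun _ _ =>
        NonemptyCompacts.isOpen_inter_nonempty_of_isOpen isOpen_ball)
  let centers : NonemptyCompacts X :=
    ⟨⟨A.image LabelledBall.center, (A.image _).finite_toSet.isCompact⟩, by simpa using hA⟩
  have hcenters : centers ∈ V := by
    refine ⟨fun y hy => ?_, mem_iInter₂.2 fun p hp => ⟨p.center, ?_, mem_ball_self (hr p hp)⟩⟩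
    · obtain ⟨p, hp, rfl⟩ := Finset.mem_image.1 hy
      exact mem_biUnion hp (mem_ball_self (hr p hp))
    · exact Finset.mem_image_of_mem _ hp
  obtain ⟨K, ⟨⟨hKsub, hKmeets⟩, hKU⟩, hKfin⟩ :=
    NonemptyCompacts.dense_setOfPred_finite.inter_open_nonempty _ (hVo.inter hUo)
      (hUd.inter_open_nonempty V hVo ⟨centers, hcenters⟩)
  refine ⟨K, hKU, hKfin, fun y hy => ?_, fun p hp => ?_⟩
  · simpa using hKsub hy
  · exact mem_iInter₂.1 hKmeets p hp

lemma exists_radius_of_finite {K : Set X} (hK : K.Finite) (F : Finset (LabelledBall X)) {ρ : ℝ}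
    (hρ : 0 < ρ) : ∃ r, 0 < r ∧ r < ρ ∧
      (∀ y ∈ K, ∀ p ∈ F, y ∈ ball p.center p.radius → closedBall y r ⊆ p.ball) ∧
      ∀ y ∈ K, ∀ y' ∈ K, y ≠ y' → r + r < dist y y' := by
  have small : ∀ {c : ℝ}, 0 < c → ∀ᶠ r in 𝓝[>] (0 : ℝ), r < c := fun hc =>
    eventually_nhdsWithin_of_eventually_nhds (eventually_lt_nhds hc)
  have hsub : ∀ᶠ r in 𝓝[>] (0 : ℝ),
      ∀ y ∈ K, ∀ p ∈ F, y ∈ ball p.center p.radius → closedBall y r ⊆ p.ball := by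
    refine hK.eventually_all.2 fun y _ => (eventually_all_finset F).2 fun p _ => ?_
    by_cases hy : y ∈ ball p.center p.radius
    · filter_upwards [small (sub_pos.2 (mem_ball.1 hy))] with r hr _
      exact closedBall_subset_closedBall' (by linarith)
    · exact Eventually.of_forall fun _ h => (hy h).elim
  have hsep : ∀ᶠ r in 𝓝[>] (0 : ℝ), ∀ y ∈ K, ∀ y' ∈ K, y ≠ y' → r + r < dist y y' := by
    refine hK.eventually_all.2 fun y _ => hK.eventually_all.2 fun y' _ => ?_
    by_cases hyy : y = y'
    · exact Eventually.of_forall fun _ h => (h hyy).elim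
    · filter_upwards [small (half_pos (dist_pos.2 hyy))] with r hr _
      linarith
  obtain ⟨r, hr, hrρ, hrsub, hrsep⟩ :=
    (eventually_mem_nhdsWithin.and ((small hρ).and (hsub.and hsep))).exists
  exact ⟨r, hr, hrρ, hrsub, hrsep⟩

lemma vietorisSet_subset_closedBall {G : Finset (LabelledBall X)} {K : NonemptyCompacts X} {r : ℝ}
    (hr : 0 ≤ r) (hGK : ∀ q ∈ G, ∃ y ∈ K, q.ball = closedBall y r)
    (hKG : ∀ y ∈ K, ∃ q ∈ G, q.ball = closedBall y r) : vietorisSet G ⊆ closedBall K r := by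
  rintro L ⟨hLG, hLmeets⟩
  rw [mem_closedBall, NonemptyCompacts.dist_eq]
  refine hausdorffDist_le_of_mem_dist hr (fun x hx => ?_) fun y hy => ?_
  · obtain ⟨q, hq, hxq⟩ := mem_iUnion₂.1 (hLG hx)
    obtain ⟨y, hy, hqy⟩ := hGK q hq
    exact ⟨y, hy, mem_closedBall.1 (hqy ▸ hxq)⟩
  · obtain ⟨q, hq, hqy⟩ := hKG y hy
    obtain ⟨x, hx, hxq⟩ := hLmeets q hq
    exact ⟨x, hx, mem_closedBall'.1 (hqy ▸ hxq)⟩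

lemma exists_balls_around (p : LabelledBall X) {K : Set X} (hK : K.Finite) {r : ℝ} (hr : 0 < r)
    (hsub : ∀ y ∈ K, y ∈ ball p.center p.radius → closedBall y r ⊆ p.ball)
    (hsep : ∀ y ∈ K, ∀ y' ∈ K, y ≠ y' → r + r < dist y y') :
    ∃ C, IsDisjointFamily C ∧ (∀ q ∈ C, q ≤ p ∧ ∃ y ∈ K, q.ball = closedBall y r) ∧
      ∀ y ∈ K, y ∈ ball p.center p.radius → ∃ q ∈ C, q.ball = closedBall y r := by
  classical
  let ballAt : X → LabelledBall X := fun y => ⟨y, r, p.label⟩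
  have mem_image : ∀ {q}, q ∈ (hK.toFinset.filter (· ∈ ball p.center p.radius)).image ballAt ↔
      ∃ y ∈ K, y ∈ ball p.center p.radius ∧ ballAt y = q := by
    simp [and_assoc]
  refine ⟨(hK.toFinset.filter (· ∈ ball p.center p.radius)).image ballAt, ⟨?_, ?_⟩, ?_, ?_⟩
  · rintro q hq
    obtain ⟨y, -, -, rfl⟩ := mem_image.1 hq
    exact hr
  · rintro q hq q' hq' hne
    obtain ⟨y, hyK, -, rfl⟩ := mem_image.1 hq
    obtain ⟨y', hy'K, -, rfl⟩ := mem_image.1 hq'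
    exact closedBall_disjoint_closedBall (hsep y hyK y' hy'K fun h => hne (h ▸ rfl))
  · rintro q hq
    obtain ⟨y, hyK, hyp, rfl⟩ := mem_image.1 hq
    exact ⟨⟨rfl, hsub y hyK hyp⟩, y, hyK, rfl⟩
  · exact fun y hyK hyp => ⟨ballAt y, mem_image.2 ⟨y, hyK, hyp, rfl⟩, rfl⟩

lemma exists_refines_truncate_eq_balls (hF : IsDisjointFamily F) (j : ℕ) {K : Set X}
    (hK : K.Finite) (hKsub : ∀ y ∈ K, ∃ p ∈ truncate j F, y ∈ ball p.center p.radius)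
    (hKmeets : ∀ p ∈ truncate j F, ∃ y ∈ K, y ∈ ball p.center p.radius) {r : ℝ} (hr : 0 < r)
    (hrsub : ∀ y ∈ K, ∀ p ∈ F, y ∈ ball p.center p.radius → closedBall y r ⊆ p.ball)
    (hrsep : ∀ y ∈ K, ∀ y' ∈ K, y ≠ y' → r + r < dist y y') :
    ∃ G, IsDisjointFamily G ∧ Refines G F ∧
      (∀ q ∈ truncate j G, ∃ y ∈ K, q.ball = closedBall y r) ∧
      ∀ y ∈ K, ∃ q ∈ truncate j G, q.ball = closedBall y r := by
  classical
  have hC : ∀ p ∈ F, ∃ C, IsDisjointFamily C ∧ (∀ q ∈ C, q ≤ p) ∧ C.Nonempty ∧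
      (p.label ≤ j → (∀ q ∈ C, ∃ y ∈ K, q.ball = closedBall y r) ∧
        ∀ y ∈ K, y ∈ ball p.center p.radius → ∃ q ∈ C, q.ball = closedBall y r) := by
    intro p hp
    by_cases hpj : p.label ≤ j
    · obtain ⟨C, hC, hCp, hKC⟩ := exists_balls_around p hK hr (fun y hy => hrsub y hy p hp) hrsep
      obtain ⟨y, hyK, hyp⟩ := hKmeets p (mem_truncate.2 ⟨hp, hpj⟩)
      obtain ⟨q, hq, -⟩ := hKC y hyK hyp
      exact ⟨C, hC, fun q hq => (hCp q hq).1, ⟨q, hq⟩, fun _ => ⟨fun q hq => (hCp q hq).2, hKC⟩⟩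
    · exact ⟨{p}, hF.mono (Finset.singleton_subset_iff.2 hp), by simp, by simp,
        fun h => (hpj h).elim⟩
  choose! C hCdisj hCle hCne hCK using hC
  refine ⟨F.biUnion C, hF.biUnion hCdisj hCle, refines_biUnion hCle hCne, fun q hq => ?_,
    fun y hyK => ?_⟩
  · obtain ⟨hqG, hqj⟩ := mem_truncate.1 hq
    obtain ⟨p, hp, hqp⟩ := Finset.mem_biUnion.1 hqG
    exact (hCK p hp ((hCle p hp q hqp).1 ▸ hqj)).1 q hqp
  · obtain ⟨p, hp, hyp⟩ := hKsub y hyK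
    obtain ⟨hpF, hpj⟩ := mem_truncate.1 hp
    obtain ⟨q, hq, hqy⟩ := (hCK p hpF hpj).2 y hyK hyp
    exact ⟨q, mem_truncate.2 ⟨Finset.mem_biUnion.2 ⟨p, hpF, hq⟩, (hCle p hpF q hq).1 ▸ hpj⟩, hqy⟩

lemma exists_refines_vietorisSet_subset (hF : IsDisjointFamily F) (j : ℕ)
    {U : Set (NonemptyCompacts X)} (hUo : IsOpen U) (hUd : Dense U) :
    ∃ G, IsDisjointFamily G ∧ Refines G F ∧ vietorisSet (truncate j G) ⊆ U := by
  rcases (truncate j F).eq_empty_or_nonempty with hA | hA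
  · exact ⟨F, hF, Refines.refl F, by simp [hA, vietorisSet_empty]⟩
  obtain ⟨K, hKU, hKfin, hKsub, hKmeets⟩ := exists_finite_mem_meets_balls hUo hUd hA
    fun p hp => hF.radius_pos p (truncate_subset hp)
  obtain ⟨ρ, hρ, hKρ⟩ := Metric.isOpen_iff.1 hUo K hKU
  obtain ⟨r, hr, hrρ, hrsub, hrsep⟩ := exists_radius_of_finite hKfin F hρ
  obtain ⟨G, hG, hGF, hGK, hKG⟩ :=
    exists_refines_truncate_eq_balls hF j hKfin hKsub hKmeets hr hrsub hrsep
  exact ⟨G, hG, hGF, (vietorisSet_subset_closedBall hr.le hGK hKG).trans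
    ((closedBall_subset_ball hrρ).trans hKρ)⟩

lemma exists_refines_forall_vietorisSet_subset (hF : IsDisjointFamily F)
    {U : Set (NonemptyCompacts X)} (hUo : IsOpen U) (hUd : Dense U) (m : ℕ) :
    ∃ G, IsDisjointFamily G ∧ Refines G F ∧ ∀ j < m, vietorisSet (truncate j G) ⊆ U := by
  induction m with
  | zero => exact ⟨F, hF, Refines.refl F, fun j hj => (Nat.not_lt_zero j hj).elim⟩
  | succ m ih =>
    obtain ⟨G, hG, hGF, hGU⟩ := ih
    obtain ⟨H, hH, hHG, hHU⟩ := exists_refines_vietorisSet_subset hG m hUo hUd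
    refine ⟨H, hH, hGF.trans hHG, fun j hj => ?_⟩
    rcases Nat.lt_succ_iff_lt_or_eq.1 hj with hj | rfl
    · exact (hHG.truncate j).vietorisSet_subset.trans (hGU j hj)
    · exact hHU

def IsStage (t : ℕ) (F : Finset (LabelledBall X)) : Prop :=
  IsDisjointFamily F ∧ ∀ p ∈ F, p.radius ≤ 2⁻¹ ^ t ∧ p.label ≤ t

lemma exists_next_stage [CompactSpace X] (hperf : Perfect (univ : Set X))
    {U : Set (NonemptyCompacts X)} (hUo : IsOpen U) (hUd : Dense U) {t : ℕ} (hF : IsStage t F) :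
    ∃ G, IsStage (t + 1) G ∧ Splits (truncate t G) F ∧
      (∀ x, ∃ q ∈ G, q.ball ⊆ closedBall x (4 * 2⁻¹ ^ t)) ∧
      ∀ j ≤ t + 1, vietorisSet (truncate j G) ⊆ U := by
  obtain ⟨F₁, hFF₁, hF₁, hnew, hnear⟩ :=
    exists_superset_near hF.1 (by positivity) (fun p hp => (hF.2 p hp).1) (t + 1)
  obtain ⟨F₂, hF₂, hF₂F₁, hF₂U⟩ := exists_refines_forall_vietorisSet_subset hF₁ hUo hUd (t + 2)
  obtain ⟨G, hG, hGF₂, hGr⟩ :=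
    exists_splits_radius_le hperf hF₂ (by positivity : (0 : ℝ) < 2⁻¹ ^ (t + 1))
  have hGF₁ : Splits G F₁ := hF₂F₁.trans_splits hGF₂
  have hlabel : ∀ p ∈ F₁, p.label ≤ t + 1 := fun p hp => by
    by_cases hpF : p ∈ F
    · exact ((hF.2 p hpF).2).trans t.le_succ
    · exact (hnew p hp hpF).le
  have htrunc : truncate t F₁ = F := by
    ext p
    refine ⟨fun hp => ?_, fun hp => mem_truncate.2 ⟨hFF₁ hp, (hF.2 p hp).2⟩⟩
    obtain ⟨hpF₁, hpt⟩ := mem_truncate.1 hp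
    by_contra hpF
    exact absurd (hnew p hpF₁ hpF) (by omega)
  refine ⟨G, ⟨hG, fun q hq => ⟨hGr q hq, ?_⟩⟩, htrunc ▸ hGF₁.truncate t, fun x => ?_,
    fun j hj => (hGF₂.refines.truncate j).vietorisSet_subset.trans (hF₂U j (by omega))⟩
  · obtain ⟨p, hp, hqp⟩ := hGF₁.1 q hq
    exact hqp.1 ▸ hlabel p hp
  · obtain ⟨p, hp, hpx⟩ := hnear x
    obtain ⟨q, hq, -, -, -, hqp, -⟩ := hGF₁.2 p hp
    exact ⟨q, hq, hqp.2.trans hpx⟩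

end Constructions

section Towers

variable {X : Type*} [MetricSpace X]

structure IsTower (U : ℕ → Set (NonemptyCompacts X)) (G : ℕ → Finset (LabelledBall X)) :
    Prop where
  isDisjointFamily : ∀ t, IsDisjointFamily (G t)
  radius_le : ∀ t, ∀ p ∈ G t, p.radius ≤ 2⁻¹ ^ t
  splits : ∀ t, Splits (truncate t (G (t + 1))) (G t)
  nonempty : (truncate 0 (G 0)).Nonempty
  exists_subset_ball : ∀ x, ∀ ε > 0, ∃ j, ∃ q ∈ truncate j (G j), q.ball ⊆ ball x ε
  exists_vietorisSet_subset : ∀ j n, ∃ t ≥ j, vietorisSet (truncate j (G t)) ⊆ U n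

def layer (G : ℕ → Finset (LabelledBall X)) (j s : ℕ) : Finset (LabelledBall X) :=
  truncate j (G (j + s))

lemma limitSet_layer_subset_succ (G : ℕ → Finset (LabelledBall X)) (j : ℕ) :
    limitSet (layer G j) LabelledBall.ball ⊆ limitSet (layer G (j + 1)) LabelledBall.ball :=
  fun x hx => mem_iInter.2 fun s => by
    obtain ⟨p, hp, hxp⟩ := mem_iUnion₂.1 (mem_iInter.1 hx (s + 1))
    refine mem_biUnion (truncate_mono j.le_succ ?_) hxp
    rwa [layer, show j + (s + 1) = j + 1 + s by omega] at hp

namespace IsTower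

variable {U : ℕ → Set (NonemptyCompacts X)} {G : ℕ → Finset (LabelledBall X)}

lemma truncate_nonempty (hG : IsTower U G) (j t : ℕ) : (truncate j (G t)).Nonempty := by
  refine Finset.Nonempty.mono (truncate_mono (Nat.zero_le j)) ?_
  induction t with
  | zero => exact hG.nonempty
  | succ t ih =>
    obtain ⟨p, hp⟩ := ih
    obtain ⟨q, hq, -, -, -, -, -⟩ := ((hG.splits t).truncate 0).2 p hp
    rw [truncate_truncate (Nat.zero_le t)] at hq
    exact ⟨q, hq⟩

lemma isSplittingScheme (hG : IsTower U G) (j : ℕ) :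
    IsSplittingScheme (layer G j) LabelledBall.ball := by
  have hsplits : ∀ s, Splits (layer G j (s + 1)) (layer G j s) := fun s => by
    have := (hG.splits (j + s)).truncate j
    rwa [truncate_truncate (Nat.le_add_right j s)] at this
  have hdisj : ∀ s, IsDisjointFamily (layer G j s) := fun s =>
    (hG.isDisjointFamily (j + s)).mono truncate_subset
  refine ⟨fun _ _ _ => isClosed_closedBall, fun s p hp => ?_, fun s => (hdisj s).pairwiseDisjoint,
    fun s q hq => ?_, fun s p hp => ?_, fun ε hε => ?_⟩
  · exact nonempty_closedBall.2 ((hdisj s).radius_pos p hp).le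
  · obtain ⟨p, hp, hqp⟩ := (hsplits s).1 q hq
    exact ⟨p, hp, hqp.2⟩
  · obtain ⟨q, hq, q', hq', hne, hqp, hq'p⟩ := (hsplits s).2 p hp
    exact ⟨q, hq, q', hq', hne, hqp.2, hq'p.2⟩
  · obtain ⟨s, hs⟩ := exists_pow_lt_of_lt_one (half_pos hε) (by norm_num : (2⁻¹ : ℝ) < 1)
    refine ⟨s, fun p hp x hx y hy => ?_⟩
    have hpr : p.radius ≤ 2⁻¹ ^ s := (hG.radius_le _ p (truncate_subset hp)).trans
      (pow_le_pow_of_le_one (by norm_num) (by norm_num) (Nat.le_add_left s j))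
    have := dist_triangle_right x y p.center
    rw [LabelledBall.ball, mem_closedBall] at hx hy
    linarith

def cantorSet [CompactSpace X] (hG : IsTower U G) (j : ℕ) : NonemptyCompacts X :=
  ⟨⟨limitSet (layer G j) LabelledBall.ball, (hG.isSplittingScheme j).isClosed_limitSet.isCompact⟩,
    (hG.isSplittingScheme j).limitSet_nonempty (hG.truncate_nonempty j j)⟩

variable [CompactSpace X] (hG : IsTower U G)

lemma cantorSet_mem (j n : ℕ) : hG.cantorSet j ∈ U n := by
  obtain ⟨t, hjt, hU⟩ := hG.exists_vietorisSet_subset j n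
  have hlayer : layer G j (t - j) = truncate j (G t) := by rw [layer, Nat.add_sub_cancel' hjt]
  refine hU ⟨?_, fun p hp => ?_⟩
  · exact hlayer ▸ iInter_subset _ (t - j)
  · rw [← hlayer] at hp
    exact (hG.isSplittingScheme j).limitSet_inter_nonempty hp

lemma perfect_cantorSet (j : ℕ) : Perfect (hG.cantorSet j : Set X) :=
  (hG.isSplittingScheme j).perfect_limitSet

lemma isTotallyDisconnected_cantorSet (j : ℕ) :
    IsTotallyDisconnected (hG.cantorSet j : Set X) :=
  (hG.isSplittingScheme j).isTotallyDisconnected_limitSet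

lemma cantorSet_subset_succ (j : ℕ) : (hG.cantorSet j : Set X) ⊆ hG.cantorSet (j + 1) :=
  limitSet_layer_subset_succ G j

lemma dense_iUnion_cantorSet : Dense (⋃ j, (hG.cantorSet j : Set X)) := by
  refine Metric.dense_iff.2 fun x ε hε => ?_
  obtain ⟨j, q, hq, hqx⟩ := hG.exists_subset_ball x ε hε
  obtain ⟨y, hyC, hyq⟩ := (hG.isSplittingScheme j).limitSet_inter_nonempty (t := 0) hq
  exact ⟨y, hqx hyq, mem_iUnion.2 ⟨j, hyC⟩⟩

end IsTower

lemma exists_isTower [CompactSpace X] [Nonempty X] (hperf : Perfect (univ : Set X))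
    (U : ℕ → Set (NonemptyCompacts X)) (hUo : ∀ n, IsOpen (U n)) (hUd : ∀ n, Dense (U n)) :
    ∃ G, IsTower U G := by
  obtain ⟨x₀⟩ := ‹Nonempty X›
  let W : ℕ → Set (NonemptyCompacts X) := fun t => ⋂ n ∈ Iic (t + 1), U n
  have hWo : ∀ t, IsOpen (W t) := fun t => (finite_Iic _).isOpen_biInter fun n _ => hUo n
  have hWd : ∀ t, Dense (W t) := fun t =>
    dense_biInter_of_isOpen (fun n _ => hUo n) (finite_Iic _).countable fun n _ => hUd n
  choose! next hstage hsplits hnear hviet using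
    fun t F (hF : IsStage t F) => exists_next_stage hperf (hWo t) (hWd t) hF
  let G : ℕ → Finset (LabelledBall X) := fun t => Nat.rec {⟨x₀, 1, 0⟩} next t
  have hG : ∀ t, IsStage t (G t) := by
    intro t
    induction t with
    | zero =>
      show IsStage 0 {⟨x₀, 1, 0⟩}
      exact ⟨⟨by simp, by simp⟩, by simp⟩
    | succ t ih => exact hstage t (G t) ih
  refine ⟨G, fun t => (hG t).1, fun t p hp => ((hG t).2 p hp).1, fun t => hsplits t _ (hG t),
    ⟨_, mem_truncate.2 ⟨Finset.mem_singleton_self _, le_rfl⟩⟩, fun x ε hε => ?_, fun j n => ?_⟩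
  · obtain ⟨t, ht⟩ := exists_pow_lt_of_lt_one (by positivity : 0 < ε / 4)
      (by norm_num : (2⁻¹ : ℝ) < 1)
    obtain ⟨q, hq, hqx⟩ := hnear t (G t) (hG t) x
    exact ⟨t + 1, q, mem_truncate.2 ⟨hq, ((hG (t + 1)).2 q hq).2⟩,
      hqx.trans (closedBall_subset_ball (by linarith))⟩
  · refine ⟨max j n + 1, by omega, (hviet _ _ (hG _) j (by omega)).trans ?_⟩
    exact biInter_subset_of_mem (mem_Iic.2 (by omega))

end Towers

end ResidualCantor

theorem stmt17_general {X : Type*} [MetricSpace X] [CompactSpace X] [Nonempty X]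
    (hperf : Perfect (Set.univ : Set X))
    (Q : Set (NonemptyCompacts X))
    (hres : Q ∈ residual (NonemptyCompacts X)) :
    ∃ C : ℕ → NonemptyCompacts X,
      (∀ i, Perfect (C i : Set X) ∧ IsTotallyDisconnected (C i : Set X)) ∧
      (∀ i, C i ∈ Q) ∧ (∀ i, (C i : Set X) ⊆ (C (i + 1) : Set X)) ∧
      Dense (⋃ i, (C i : Set X)) := by
  obtain ⟨T, hTQ, hTδ, hTd⟩ := mem_residual.1 hres
  obtain ⟨U, hUo, rfl⟩ := isGδ_iff_eq_iInter_nat.1 hTδ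
  obtain ⟨G, hG⟩ := ResidualCantor.exists_isTower hperf U hUo fun n => hTd.mono (iInter_subset U n)
  exact ⟨hG.cantorSet, fun j => ⟨hG.perfect_cantorSet j, hG.isTotallyDisconnected_cantorSet j⟩,
    fun j => hTQ (mem_iInter.2 (hG.cantorSet_mem j)), hG.cantorSet_subset_succ,
    hG.dense_iUnion_cantorSet⟩

theorem stmt17 {X : Type*} [MetricSpace X] [CompactSpace X] [Nonempty X]
    (hperf : Perfect (Set.univ : Set X))
    (Q : Set (NonemptyCompacts X))
    (hher : ∀ A ∈ Q, ∀ B : NonemptyCompacts X, (B : Set X) ⊆ (A : Set X) → B ∈ Q)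
    (hres : Q ∈ residual (NonemptyCompacts X)) :
    ∃ C : ℕ → NonemptyCompacts X,
      (∀ i, Perfect (C i : Set X) ∧ IsTotallyDisconnected (C i : Set X)) ∧
      (∀ i, C i ∈ Q) ∧ (∀ i, (C i : Set X) ⊆ (C (i + 1) : Set X)) ∧
      Dense (⋃ i, (C i : Set X)) :=
  stmt17_general hperf Q hres
end
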